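/- arXiv:2203.01423 — 4 statements merged into one kernel-verified Lean document; each statement's English description precedes it below -/
import Mathlib

section
/- Let X be a compact metrizable space and let Y ⊆ X be a locally connected subcontinuum such that the complement X \ Y is homeomorphic to a subspace of ℝ. Then Y is a retract of X, i.e., there exists a continuous map r : X → Y with r(y) = y for every y ∈ Y. -/
open Set Topology

/-- A topological space has no isolated points if no singleton is open. -/
def NoIsolatedPoints (Y : Type*) [TopologicalSpace Y] : Prop :=
  ∀ y : Y, ¬ IsOpen ({y} : Set Y)

/-- `(M, f|_M)` is a minimal dynamical system with `f(M) = M`: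
`M` is nonempty, `f(M) = M`, and `M` has no nonempty proper closed subset
invariant under `f|_M`. -/
def MinimalSystemOn {Y : Type*} [TopologicalSpace Y] (f : Y → Y) (M : Set Y) : Prop :=
  M.Nonempty ∧ f '' M = M ∧
    ∀ N, N ⊆ M → N.Nonempty → IsClosed N → f '' N ⊆ N → N = M

/-- The system `𝓜(Y)` of all compact sets `M ⊆ Y` such that there is a continuous
`f : Y → Y` with `f(M) = M` and `(M, f|_M)` a minimal dynamical system. -/
def MSpace (Y : Type*) [TopologicalSpace Y] : Set (Set Y) :=
  {M | IsCompact M ∧ ∃ f : Y → Y, Continuous f ∧ MinimalSystemOn f M}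

/-- `𝓜(Z)` for a subspace `Z ⊆ X` (carrying the subspace topology),
viewed as a system of subsets of `X`. -/
def MSetIn {X : Type*} [TopologicalSpace X] (Z : Set X) : Set (Set X) :=
  {M | ∃ M' ∈ MSpace (↥Z), M = Subtype.val '' M'}

/-- `𝓜*(L; R)`: members of `𝓜(L ∪ R)` (`= 𝓜(L ⊔ R)` for disjoint `L, R`) such that
`M ∩ L` and `M ∩ R` have the same cardinality. -/
def MStarIn {X : Type*} [TopologicalSpace X] (L R : Set X) : Set (Set X) :=
  {M | M ∈ MSetIn (L ∪ R) ∧ Cardinal.mk ↥(M ∩ L) = Cardinal.mk ↥(M ∩ R)}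

/-- An arc: a set homeomorphic to `[0,1]`. -/
def IsArc {X : Type*} [TopologicalSpace X] (A : Set X) : Prop :=
  Nonempty (↥A ≃ₜ ↥(Set.Icc (0:ℝ) 1))

/-- A ray: a set homeomorphic to `[0,∞)`. -/
def IsRaySet {X : Type*} [TopologicalSpace X] (A : Set X) : Prop :=
  Nonempty (↥A ≃ₜ ↥(Set.Ici (0:ℝ)))

/-- A Cantor set: nonempty, compact, totally disconnected, without isolated points
(metrizability is inherited from the ambient space). -/
def IsCantorSet {X : Type*} [TopologicalSpace X] (M : Set X) : Prop :=
  M.Nonempty ∧ IsCompact M ∧ IsTotallyDisconnected M ∧ NoIsolatedPoints ↥M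

/-- A circle: a set homeomorphic to the unit circle `S¹ ⊆ ℂ`. -/
def IsCircleSet {X : Type*} [TopologicalSpace X] (C : Set X) : Prop :=
  Nonempty (↥C ≃ₜ ↥(Metric.sphere (0:ℂ) 1))

/-- A cantoroid: a nonempty compact (metrizable) set without isolated points in which
the union of the degenerate (singleton) connected components is dense. -/
def IsCantoroid {X : Type*} [TopologicalSpace X] (M : Set X) : Prop :=
  M.Nonempty ∧ IsCompact M ∧ NoIsolatedPoints ↥M ∧
    Dense {x : ↥M | connectedComponent x = {x}}

/-- A union of finitely many (at least one) pairwise disjoint circles. -/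
def FinUnionDisjCircles {X : Type*} [TopologicalSpace X] (M : Set X) : Prop :=
  ∃ (n : ℕ) (C : Fin n → Set X), 0 < n ∧ (∀ i, IsCircleSet (C i)) ∧
    Pairwise (Function.onFun Disjoint C) ∧ M = ⋃ i, C i

/-- A local dendrite: a locally connected continuum containing only finitely many circles. -/
def IsLocalDendrite {X : Type*} [TopologicalSpace X] (L : Set X) : Prop :=
  IsCompact L ∧ IsConnected L ∧ LocallyConnectedSpace ↥L ∧
    {C : Set X | C ⊆ L ∧ IsCircleSet C}.Finite

/-- The decomposition `X = L ∪ J ∪ R` witnessing that the continuum `X` belongs to the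
class `𝒞`: `J` is a free interval dense in `X`; `L` and `R` are locally connected
subcontinua of `X` disjoint from `J`; and there are rays `J_L, J_R` with
`J = J_L ∪ J_R` such that `L ∪ J_L` is a compactification of `J_L` and `R ∪ J_R` is a
compactification of `J_R`. -/
structure ClassC {X : Type*} [TopologicalSpace X] (L J R : Set X) : Prop where
  union_eq : L ∪ J ∪ R = Set.univ
  openJ : IsOpen J
  freeJ : Nonempty (↥J ≃ₜ ↥(Set.Ioo (0:ℝ) 1))
  denseJ : Dense J
  compactL : IsCompact L
  connL : IsConnected L
  locConnL : LocallyConnectedSpace ↥L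
  compactR : IsCompact R
  connR : IsConnected R
  locConnR : LocallyConnectedSpace ↥R
  disjLJ : Disjoint L J
  disjRJ : Disjoint R J
  rays : ∃ JL JR : Set X, JL ∪ JR = J ∧ IsRaySet JL ∧ IsRaySet JR ∧
    IsCompact (L ∪ JL) ∧ L ∪ JL ⊆ closure JL ∧
    IsCompact (R ∪ JR) ∧ R ∪ JR ⊆ closure JR

namespace Stmt11

open Set Topology Metric Filter

variable {E : Type*} [MetricSpace E]

/-- Uniform local connectedness for a compact locally connected metric space. -/
lemma ulc [CompactSpace E] [LocallyConnectedSpace E] :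
    ∀ ε > (0:ℝ), ∃ δ > (0:ℝ), ∀ a b : E, dist a b < δ →
      ∃ C : Set E, IsPreconnected C ∧ a ∈ C ∧ b ∈ C ∧ C ⊆ closedBall a ε := by
  intro ε hε
  have hV : ∀ x : E, ∃ V : Set E, V ⊆ ball x (ε/2) ∧ IsOpen V ∧ x ∈ V ∧ IsConnected V := by
    intro x
    rcases locallyConnectedSpace_iff_subsets_isOpen_isConnected.1 ‹_› x (ball x (ε/2))
      (ball_mem_nhds x (by linarith)) with ⟨V, h1, h2, h3, h4⟩
    exact ⟨V, h1, h2, h3, h4⟩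
  choose V hVsub hVopen hVmem hVconn using hV
  have hcov : (univ : Set E) ⊆ ⋃ x, V x := fun x _ => mem_iUnion.2 ⟨x, hVmem x⟩
  rcases lebesgue_number_lemma_of_metric isCompact_univ hVopen hcov with ⟨δ, hδ, hball⟩
  refine ⟨δ, hδ, fun a b hab => ?_⟩
  rcases hball a (mem_univ a) with ⟨x, hx⟩
  have ha : a ∈ V x := hx (mem_ball_self hδ)
  have hb : b ∈ V x := hx (by simpa [mem_ball, dist_comm] using hab)
  refine ⟨V x, (hVconn x).isPreconnected, ha, hb, fun z hz => ?_⟩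
  have h1 : dist z x < ε/2 := (hVsub x hz)
  have h2 : dist a x < ε/2 := (hVsub x ha)
  have : dist z a ≤ dist z x + dist x a := dist_triangle _ _ _
  rw [mem_closedBall]
  rw [dist_comm x a] at this
  linarith

/-- extend a chain by one point -/
private lemma chain_snoc {C : Set E} {a x y : E} {η : ℝ} {L : ℕ} {c : ℕ → E}
    (h0 : c 0 = a) (hL : c L = x) (hmem : ∀ i, c i ∈ C) (hstep : ∀ i < L, dist (c i) (c (i+1)) < η)
    (hy : y ∈ C) (hxy : dist x y < η) :
    ∃ (L' : ℕ) (c' : ℕ → E), c' 0 = a ∧ c' L' = y ∧ (∀ i, c' i ∈ C) ∧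
      ∀ i < L', dist (c' i) (c' (i+1)) < η := by
  refine ⟨L+1, fun i => if i < L + 1 then c i else y, by simp [h0], by simp, ?_, ?_⟩
  · intro i; by_cases h : i < L + 1 <;> simp [h, hmem, hy]
  · intro i hi
    rcases Nat.lt_succ_iff_lt_or_eq.1 hi with h | h
    · have h1 : i < L + 1 := Nat.lt_succ_of_lt h
      have h2 : i + 1 < L + 1 := Nat.succ_lt_succ h
      simpa [h1, h2] using hstep i h
    · subst h
      have h1 : i < i + 1 := Nat.lt_succ_self i
      simp only [h1, if_pos, Nat.lt_irrefl, if_neg (lt_irrefl (i+1))]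
      rw [hL] at *
      simpa [hL] using hxy

/-- chain connectedness of preconnected sets in metric spaces -/
lemma chain_of_preconnected {C : Set E} (hC : IsPreconnected C) {a b : E}
    (ha : a ∈ C) (hb : b ∈ C) {η : ℝ} (hη : 0 < η) :
    ∃ (L : ℕ) (c : ℕ → E), c 0 = a ∧ c L = b ∧ (∀ i, c i ∈ C) ∧
      ∀ i < L, dist (c i) (c (i+1)) < η := by
  by_contra hcon
  push_neg at hcon
  -- A = points reachable by chains
  set A : Set E := {x | x ∈ C ∧ ∃ (L : ℕ) (c : ℕ → E), c 0 = a ∧ c L = x ∧ (∀ i, c i ∈ C) ∧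
      ∀ i < L, dist (c i) (c (i+1)) < η} with hA
  have haA : a ∈ A := ⟨ha, 0, fun _ => a, rfl, rfl, fun _ => ha, fun i hi => absurd hi (Nat.not_lt_zero i)⟩
  have hbA : b ∉ A := by
    rintro ⟨-, L, c, h0, hL, hmem, hstep⟩
    rcases hcon L c h0 hL hmem with ⟨i, hi, hge⟩
    exact absurd (hstep i hi) (not_lt.2 hge)
  set U : Set E := ⋃ x ∈ A, ball x η with hU
  set W : Set E := ⋃ x ∈ C \ A, ball x η with hW
  have hUopen : IsOpen U := isOpen_biUnion fun _ _ => isOpen_ball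
  have hWopen : IsOpen W := isOpen_biUnion fun _ _ => isOpen_ball
  have hCsub : C ⊆ U ∪ W := by
    intro x hx
    by_cases h : x ∈ A
    · exact Or.inl (mem_biUnion h (mem_ball_self hη))
    · exact Or.inr (mem_biUnion ⟨hx, h⟩ (mem_ball_self hη))
  have hCU : (C ∩ U).Nonempty := ⟨a, ha, mem_biUnion haA (mem_ball_self hη)⟩
  have hCW : (C ∩ W).Nonempty := ⟨b, hb, mem_biUnion ⟨hb, hbA⟩ (mem_ball_self hη)⟩
  rcases hC U W hUopen hWopen hCsub hCU hCW with ⟨y, hyC, hyU, hyW⟩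
  -- y in U: y is reachable
  rcases mem_iUnion₂.1 hyU with ⟨x, hxA, hyx⟩
  have hyA : y ∈ A := by
    rcases hxA with ⟨hxC, L, c, h0, hL, hmem, hstep⟩
    have : dist x y < η := by rwa [mem_ball, dist_comm] at hyx
    rcases chain_snoc h0 hL hmem hstep hyC this with ⟨L', c', h0', hL', hmem', hstep'⟩
    exact ⟨hyC, L', c', h0', hL', hmem', hstep'⟩
  rcases mem_iUnion₂.1 hyW with ⟨x', hx'CA, hyx'⟩
  rcases hyA with ⟨-, L, c, h0, hL, hmem, hstep⟩
  have : dist y x' < η := by simpa [mem_ball, dist_comm] using hyx'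
  rcases chain_snoc h0 hL hmem hstep hx'CA.1 this with ⟨L', c', h0', hL', hmem', hstep'⟩
  exact hx'CA.2 ⟨hx'CA.1, L', c', h0', hL', hmem', hstep'⟩



variable {E : Type*} [MetricSpace E]

/-- Stage invariant for the chain-refinement path construction. -/
def StInv (a b : E) (δk : ℝ) (p : ℕ × (ℕ → E)) : Prop :=
  1 ≤ p.1 ∧ p.2 0 = a ∧ (∀ i, p.1 ≤ i → p.2 i = b) ∧ ∀ i < p.1, dist (p.2 i) (p.2 (i+1)) < δk

/-- Refinement step: refine a `δ1`-chain into a `δ2`-chain which moves at most `e1`. -/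
lemma stInv_step {a b : E} {δ1 δ2 e1 : ℝ} (hδ2 : 0 < δ2) (he1 : 0 ≤ e1)
    (hulc : ∀ x y : E, dist x y < δ1 →
      ∃ C : Set E, IsPreconnected C ∧ x ∈ C ∧ y ∈ C ∧ C ⊆ closedBall x e1)
    {p : ℕ × (ℕ → E)} (hp : StInv a b δ1 p) :
    ∃ q : ℕ × (ℕ → E), StInv a b δ2 q ∧
      ∃ M : ℕ, 1 ≤ M ∧ q.1 = p.1 * M ∧ ∀ j, dist (q.2 j) (p.2 (j / M)) ≤ e1 := by
  obtain ⟨L, c⟩ := p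
  obtain ⟨hL1, hc0, hcb, hstep⟩ := hp
  simp only at hL1 hc0 hcb hstep ⊢
  have H : ∀ i : ℕ, ∃ (m : ℕ) (f : ℕ → E), f 0 = c i ∧ (∀ j, m ≤ j → f j = c (i+1)) ∧
      (∀ j, dist (f j) (c i) ≤ e1) ∧ ∀ j < m, dist (f j) (f (j+1)) < δ2 := by
    intro i
    by_cases hi : i < L
    · rcases hulc (c i) (c (i+1)) (hstep i hi) with ⟨C, hCpre, h1, h2, hCball⟩
      rcases chain_of_preconnected hCpre h1 h2 hδ2 with ⟨m, f, hf0, hfm, hfmem, hfstep⟩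
      refine ⟨m, fun j => if j ≤ m then f j else c (i+1), by simp [hf0], ?_, ?_, ?_⟩
      · intro j hj
        rcases eq_or_lt_of_le hj with h | h
        · simp [← h, hfm]
        · simp [Nat.not_le.2 h, if_neg]
      · intro j
        by_cases hj : j ≤ m
        · simpa [hj] using hCball (hfmem j)
        · simpa [hj] using hCball h2
      · intro j hj
        have h1' : j ≤ m := le_of_lt hj
        have h2' : j + 1 ≤ m := hj
        simpa [h1', h2'] using hfstep j hj
    · push_neg at hi
      have hci : c i = b := hcb i hi
      have hci1 : c (i+1) = b := hcb (i+1) (le_trans hi (Nat.le_succ i))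
      exact ⟨0, fun _ => c (i+1), by rw [hci, hci1], fun j _ => rfl,
        fun j => by rw [hci, hci1]; simpa using he1,
        fun j hj => absurd hj (Nat.not_lt_zero j)⟩
  choose m f hf0 hfend hfball hfstep using H
  classical
  set M : ℕ := max 1 ((Finset.range L).sup m) with hM
  have hM1 : 1 ≤ M := le_max_left _ _
  have hMm : ∀ i, i < L → m i ≤ M := fun i hi =>
    le_trans (Finset.le_sup (Finset.mem_range.2 hi)) (le_max_right _ _)
  clear_value M
  have hM0 : 0 < M := hM1
  set c' : ℕ → E := fun j => if j / M < L then f (j/M) (min (j % M) (m (j/M))) else b with hc'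
  refine ⟨(L * M, c'), ⟨?_, ?_, ?_, ?_⟩, M, hM1, rfl, ?_⟩
  · exact Nat.one_le_iff_ne_zero.2 (by positivity)
  · show c' 0 = a
    have h0 : (0:ℕ) / M = 0 := Nat.zero_div M
    have hL0 : (0:ℕ) / M < L := by omega
    rw [hc']
    simp only [h0, Nat.zero_mod, hL0, if_pos]
    rw [min_eq_left (Nat.zero_le _), hf0 0, hc0]
    have h0L : 0 < L := hL1
    rw [if_pos h0L]
  · intro i hi
    show c' i = b
    have h1 : i ≥ L * M := hi
    have : ¬ (i / M < L) := by
      rw [Nat.div_lt_iff_lt_mul hM0]; omega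
    rw [hc']; simp only [this, if_false, if_neg]
  · intro j hj
    have hj' : j < L * M := hj
    show dist (c' j) (c' (j+1)) < δ2
    have hq : j / M < L := (Nat.div_lt_iff_lt_mul hM0).2 hj'
    have hr : j % M < M := Nat.mod_lt _ hM0
    have hqr : M * (j / M) + j % M = j := Nat.div_add_mod j M
    set q := j / M with hqdef
    set r := j % M with hrdef
    by_cases hcase : r + 1 < M
    · have hdiv : (j+1) / M = q ∧ (j+1) % M = r + 1 :=
        (Nat.div_mod_unique hM0).2 ⟨by omega, hcase⟩
      rw [hc']
      simp only [← hqdef, ← hrdef, hdiv.1, hdiv.2, if_pos hq]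
      by_cases hrm : r < m q
      · rw [min_eq_left (le_of_lt hrm), min_eq_left hrm]
        exact hfstep q r hrm
      · push_neg at hrm
        rw [min_eq_right hrm, min_eq_right (le_trans hrm (Nat.le_succ r)), dist_self]
        exact hδ2
    · have hrM : r + 1 = M := by omega
      have hdiv : (j+1) / M = q + 1 ∧ (j+1) % M = 0 :=
        (Nat.div_mod_unique hM0).2 ⟨by rw [Nat.mul_succ]; omega, hM0⟩
      have hval : c' (j+1) = c (q+1) := by
        rw [hc']
        simp only [hdiv.1, hdiv.2]
        by_cases hq1 : q + 1 < L
        · rw [if_pos hq1, min_eq_left (Nat.zero_le _), hf0 (q+1)]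
        · push_neg at hq1
          rw [if_neg (Nat.not_lt.2 hq1), hcb (q+1) hq1]
      rw [hval]
      have hvalj : c' j = f q (min r (m q)) := by
        rw [hc']; simp only [← hqdef, ← hrdef, if_pos hq]
      rw [hvalj]
      by_cases hrm : m q ≤ r
      · rw [min_eq_right hrm, hfend q (m q) le_rfl, dist_self]; exact hδ2
      · push_neg at hrm
        have hmq : m q = M := le_antisymm (hMm q hq) (by omega)
        rw [min_eq_left (le_of_lt hrm)]
        have := hfstep q r hrm
        rwa [show r + 1 = m q by omega, hfend q (m q) le_rfl] at this
  · intro j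
    show dist (c' j) (c (j / M)) ≤ e1
    by_cases hq : j / M < L
    · rw [hc']; simp only [if_pos hq]; exact hfball (j/M) _
    · push_neg at hq
      rw [hc']; simp only [if_neg (Nat.not_lt.2 hq), hcb (j/M) hq, dist_self]; exact he1



open Set Topology Metric Filter

variable {E : Type*} [MetricSpace E]

lemma exists_small_path [CompactSpace E] [LocallyConnectedSpace E] :
    ∀ ε > (0:ℝ), ∃ δ > (0:ℝ), ∀ a b : E, dist a b < δ →
      ∃ γ : ℝ → E, Continuous γ ∧ (∀ t, t ≤ 0 → γ t = a) ∧ (∀ t, 1 ≤ t → γ t = b) ∧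
        ∀ t, dist (γ t) a ≤ ε := by
  classical
  intro ε hε
  set es : ℕ → ℝ := fun k => ε/4/2^k with hes
  have hes0 : ∀ k, 0 < es k := by intro k; rw [hes]; positivity
  have heshalf : ∀ k, es (k+1) + es (k+1) = es k := by
    intro k; rw [hes]; simp only; rw [pow_succ]; field_simp; ring
  have hd : ∀ k : ℕ, ∃ δ, 0 < δ ∧ δ ≤ es k ∧ ∀ x y : E, dist x y < δ →
      ∃ C : Set E, IsPreconnected C ∧ x ∈ C ∧ y ∈ C ∧ C ⊆ closedBall x (es k) := by
    intro k
    rcases ulc (E := E) (es k) (hes0 k) with ⟨δ, hδ, hP⟩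
    exact ⟨min δ (es k), lt_min hδ (hes0 k), min_le_right _ _,
      fun x y h => hP x y (lt_of_lt_of_le h (min_le_left _ _))⟩
  choose ds hds0 hdsle hdsP using hd
  refine ⟨ds 0, hds0 0, fun a b hab => ?_⟩
  -- base chain
  rcases hdsP 0 a b hab with ⟨C, hCpre, haC, hbC, hCball⟩
  rcases chain_of_preconnected hCpre haC hbC (hds0 0) with ⟨L0, c0', h00, h0L, h0mem, h0step⟩
  set c0 : ℕ → E := fun i => if i ≤ L0 then c0' i else b with hc0def
  have hbase : StInv a b (ds 0) (L0 + 1, c0) := by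
    refine ⟨Nat.le_add_left 1 L0, ?_, ?_, ?_⟩
    · show c0 0 = a
      rw [hc0def]; simp only [Nat.zero_le, if_pos]; exact h00
    · intro i hi
      show c0 i = b
      have h1 : ¬ i ≤ L0 := by omega
      rw [hc0def]; simp only [h1, if_neg, if_false]
    · intro i hi
      show dist (c0 i) (c0 (i+1)) < ds 0
      by_cases h1 : i < L0
      · have h2 : i ≤ L0 := le_of_lt h1
        have h3 : i + 1 ≤ L0 := h1
        rw [hc0def]; simp only [h2, h3, if_pos]
        exact h0step i h1
      · have h2 : i = L0 := by omega
        subst h2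
        have h3 : ¬ i + 1 ≤ i := by omega
        rw [hc0def]; simp only [le_refl, if_pos, h3, if_neg, if_false]
        rw [h0L, dist_self]; exact hds0 0
  have hball0 : ∀ i, dist (c0 i) a ≤ es 0 := by
    intro i
    by_cases h : i ≤ L0
    · rw [hc0def]; simp only [h, if_pos]
      simpa [mem_closedBall] using hCball (h0mem i)
    · rw [hc0def]; simp only [h, if_neg, if_false]
      simpa [mem_closedBall] using hCball hbC
  -- step function
  have stepEx : ∀ (k : ℕ) (p : ℕ × (ℕ → E)), ∃ q : ℕ × (ℕ → E),
      StInv a b (ds k) p → (StInv a b (ds (k+1)) q ∧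
        ∃ M, 1 ≤ M ∧ q.1 = p.1 * M ∧ ∀ j, dist (q.2 j) (p.2 (j / M)) ≤ es k) := by
    intro k p
    by_cases hp : StInv a b (ds k) p
    · rcases stInv_step (hds0 (k+1)) (le_of_lt (hes0 k)) (hdsP k) hp with ⟨q, hq1, hq2⟩
      exact ⟨q, fun _ => ⟨hq1, hq2⟩⟩
    · exact ⟨p, fun h => absurd h hp⟩
  choose stepF stepSpec using stepEx
  set Stg : ℕ → ℕ × (ℕ → E) := fun k => Nat.rec (L0 + 1, c0) stepF k with hStg
  have hInv : ∀ k, StInv a b (ds k) (Stg k) := by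
    intro k; induction k with
    | zero => exact hbase
    | succ k ih => exact (stepSpec k (Stg k) ih).1
  have hRel : ∀ k, ∃ M, 1 ≤ M ∧ (Stg (k+1)).1 = (Stg k).1 * M ∧
      ∀ j, dist ((Stg (k+1)).2 j) ((Stg k).2 (j / M)) ≤ es k :=
    fun k => (stepSpec k (Stg k) (hInv k)).2
  set idx : ℕ → ℝ → ℕ := fun k t => min (Stg k).1 ⌊t * (Stg k).1⌋₊ with hidx
  set φ : ℕ → ℝ → E := fun k t => (Stg k).2 (idx k t) with hφ
  have hφsucc : ∀ k t, dist (φ (k+1) t) (φ k t) ≤ es k := by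
    intro k t
    rcases hRel k with ⟨M, hM1, hLM, hclose⟩
    have hM0 : 0 < M := hM1
    have hL1 : 1 ≤ (Stg k).1 := (hInv k).1
    have key : idx (k+1) t / M = idx k t := by
      have hfloor : ⌊t * (((Stg k).1 * M : ℕ) : ℝ)⌋₊ / M = ⌊t * ((Stg k).1:ℝ)⌋₊ := by
        have h1 : (t * ((Stg k).1:ℝ) * M) / (M:ℝ) = t * (Stg k).1 := by
          field_simp
        rw [show ((((Stg k).1) * M : ℕ) : ℝ) = ((Stg k).1:ℝ) * (M:ℝ) by push_cast; ring,
            show t * (((Stg k).1:ℝ) * M) = t * (Stg k).1 * M by ring]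
        conv_rhs => rw [← h1]
        rw [Nat.floor_div_natCast]
      show min (Stg (k+1)).1 ⌊t * ((Stg (k+1)).1:ℝ)⌋₊ / M = min (Stg k).1 ⌊t * ((Stg k).1:ℝ)⌋₊
      rw [hLM]
      by_cases hcap : ⌊t * ((Stg k).1:ℝ)⌋₊ < (Stg k).1
      · have h2 : ⌊t * (((Stg k).1 * M : ℕ) : ℝ)⌋₊ < (Stg k).1 * M :=
          (Nat.div_lt_iff_lt_mul hM0).1 (by rw [hfloor]; exact hcap)
        rw [min_eq_right (le_of_lt h2), min_eq_right (le_of_lt hcap)]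
        exact hfloor
      · push_neg at hcap
        have h2 : (Stg k).1 * M ≤ ⌊t * (((Stg k).1 * M : ℕ) : ℝ)⌋₊ := by
          rw [← Nat.le_div_iff_mul_le hM0, hfloor]; exact hcap
        rw [min_eq_left h2, min_eq_left hcap, Nat.mul_div_cancel _ hM0]
    have h3 := hclose (idx (k+1) t)
    rw [key] at h3
    exact h3
  have hgeo : ∀ k (mm : ℕ) t, dist (φ (k+mm) t) (φ k t) ≤ 2 * es k - 2 * es (k+mm) := by
    intro k mm t
    induction mm with
    | zero => simp
    | succ mm ih =>
      have h1 := hφsucc (k+mm) t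
      have h2 := heshalf (k+mm)
      calc dist (φ (k+(mm+1)) t) (φ k t)
          ≤ dist (φ ((k+mm)+1) t) (φ (k+mm) t) + dist (φ (k+mm) t) (φ k t) := by
            rw [show k+(mm+1) = (k+mm)+1 by omega]; exact dist_triangle _ _ _
        _ ≤ es (k+mm) + (2 * es k - 2 * es (k+mm)) := add_le_add h1 ih
        _ = 2 * es k - 2 * es ((k+mm)+1) := by linarith
        _ = 2 * es k - 2 * es (k+(mm+1)) := by rw [show (k+mm)+1 = k+(mm+1) by omega]
  have hbnd : ∀ (k mm : ℕ) t, k ≤ mm → dist (φ mm t) (φ k t) ≤ 2 * es k := by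
    intro k mm t h
    obtain ⟨d, rfl⟩ := Nat.exists_eq_add_of_le h
    have := hgeo k d t
    have h2 := hes0 (k+d)
    linarith
  have htend0 : Tendsto es atTop (𝓝 0) := by
    have : es = fun k : ℕ => (ε/4) * (1/2:ℝ)^k := by
      funext k; rw [hes]; simp only; rw [div_pow, one_pow]; ring
    rw [this]
    simpa using (tendsto_pow_atTop_nhds_zero_of_lt_one (by norm_num) (by norm_num : (1/2:ℝ) < 1)).const_mul (ε/4)
  have hcauchy : ∀ t, CauchySeq (fun k => φ k t) := by
    intro t
    rw [Metric.cauchySeq_iff']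
    intro ε' hε'
    have htend : Tendsto (fun k => 2 * es k) atTop (𝓝 0) := by
      simpa using htend0.const_mul 2
    obtain ⟨N, hN⟩ := (htend.eventually_lt_const hε').exists
    exact ⟨N, fun n hn => lt_of_le_of_lt (hbnd N n t hn) hN⟩
  have : CompleteSpace E := complete_of_compact
  choose γ hγ using fun t => cauchySeq_tendsto_of_complete (hcauchy t)
  have hlim : ∀ k t, dist (γ t) (φ k t) ≤ 2 * es k := by
    intro k t
    have h1 : Tendsto (fun mm => dist (φ mm t) (φ k t)) atTop (𝓝 (dist (γ t) (φ k t))) :=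
      (hγ t).dist tendsto_const_nhds
    refine le_of_tendsto h1 ?_
    filter_upwards [eventually_ge_atTop k] with mm hmm
    exact hbnd k mm t hmm
  have hstage : ∀ k (t t' : ℝ), |t - t'| * (Stg k).1 ≤ 1 → dist (φ k t) (φ k t') ≤ ds k := by
    intro k t t' hdiff
    have hL1 : 1 ≤ (Stg k).1 := (hInv k).1
    have hfl : ∀ x y : ℝ, x ≤ y + 1 → ⌊x⌋₊ ≤ ⌊y⌋₊ + 1 := by
      intro x y hxy
      by_cases hy : 0 ≤ y
      · calc ⌊x⌋₊ ≤ ⌊y+1⌋₊ := Nat.floor_le_floor hxy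
          _ = ⌊y⌋₊ + 1 := Nat.floor_add_one hy
      · push_neg at hy
        have hx1 : x < 1 := by linarith
        have : ⌊x⌋₊ = 0 := Nat.floor_eq_zero.2 hx1
        omega
    have habs : |t * ((Stg k).1:ℝ) - t' * ((Stg k).1:ℝ)| ≤ 1 := by
      rw [show t*((Stg k).1:ℝ) - t'*((Stg k).1:ℝ) = (t - t')*((Stg k).1:ℝ) by ring, abs_mul,
        abs_of_nonneg (by positivity : (0:ℝ) ≤ ((Stg k).1:ℝ))]
      exact hdiff
    obtain ⟨hab1, hab2⟩ := abs_le.1 habs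
    have h1 : ⌊t * ((Stg k).1:ℝ)⌋₊ ≤ ⌊t' * ((Stg k).1:ℝ)⌋₊ + 1 := hfl _ _ (by linarith)
    have h2 : ⌊t' * ((Stg k).1:ℝ)⌋₊ ≤ ⌊t * ((Stg k).1:ℝ)⌋₊ + 1 := hfl _ _ (by linarith)
    have hstepk := (hInv k).2.2.2
    have hii : idx k t = idx k t' ∨ (idx k t + 1 = idx k t' ∧ idx k t < (Stg k).1) ∨
        (idx k t' + 1 = idx k t ∧ idx k t' < (Stg k).1) := by
      have e1 : idx k t = min (Stg k).1 ⌊t * ((Stg k).1:ℝ)⌋₊ := rfl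
      have e2 : idx k t' = min (Stg k).1 ⌊t' * ((Stg k).1:ℝ)⌋₊ := rfl
      omega
    rcases hii with h | ⟨h, hlt⟩ | ⟨h, hlt⟩
    · show dist ((Stg k).2 (idx k t)) ((Stg k).2 (idx k t')) ≤ ds k
      rw [h, dist_self]; exact le_of_lt (hds0 k)
    · show dist ((Stg k).2 (idx k t)) ((Stg k).2 (idx k t')) ≤ ds k
      rw [← h]
      exact le_of_lt (hstepk _ hlt)
    · show dist ((Stg k).2 (idx k t)) ((Stg k).2 (idx k t')) ≤ ds k
      rw [← h, dist_comm]
      exact le_of_lt (hstepk _ hlt)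
  refine ⟨γ, ?_, ?_, ?_, ?_⟩
  · rw [Metric.continuous_iff]
    intro t₀ ε' hε'
    have htend : Tendsto (fun k => 5 * es k) atTop (𝓝 0) := by
      simpa using htend0.const_mul 5
    obtain ⟨k, hk⟩ := (htend.eventually_lt_const hε').exists
    have hL1 : 1 ≤ (Stg k).1 := (hInv k).1
    have hLpos : (0:ℝ) < ((Stg k).1:ℝ) := by exact_mod_cast hL1
    refine ⟨1 / ((Stg k).1:ℝ), by positivity, fun t ht => ?_⟩
    have hdiff : |t - t₀| * ((Stg k).1:ℝ) ≤ 1 := by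
      rw [Real.dist_eq] at ht
      rw [← le_div_iff₀ hLpos]
      exact le_of_lt ht
    have hds' : ds k ≤ es k := hdsle k
    calc dist (γ t) (γ t₀)
        ≤ dist (γ t) (φ k t) + dist (φ k t) (φ k t₀) + dist (φ k t₀) (γ t₀) :=
          dist_triangle4 _ _ _ _
      _ ≤ 2 * es k + ds k + 2 * es k := by
          refine add_le_add (add_le_add (hlim k t) (hstage k t t₀ hdiff)) ?_
          rw [dist_comm]; exact hlim k t₀
      _ ≤ 5 * es k := by linarith
      _ < ε' := hk
  · intro t ht
    have hφa : ∀ k, φ k t = a := by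
      intro k
      have hL1 : 1 ≤ (Stg k).1 := (hInv k).1
      have h1 : t * ((Stg k).1:ℝ) ≤ 0 :=
        mul_nonpos_of_nonpos_of_nonneg ht (by positivity)
      have h2 : ⌊t * ((Stg k).1:ℝ)⌋₊ = 0 := Nat.floor_eq_zero.2 (lt_of_le_of_lt h1 one_pos)
      have h3 : idx k t = 0 := by
        show min (Stg k).1 ⌊t * ((Stg k).1:ℝ)⌋₊ = 0
        rw [h2]; omega
      show (Stg k).2 (idx k t) = a
      rw [h3]
      exact (hInv k).2.1
    have h4 : Tendsto (fun k => φ k t) atTop (𝓝 a) := by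
      have : (fun k => φ k t) = fun _ => a := funext hφa
      rw [this]; exact tendsto_const_nhds
    exact tendsto_nhds_unique (hγ t) h4
  · intro t ht
    have hφb : ∀ k, φ k t = b := by
      intro k
      have hL1 : 1 ≤ (Stg k).1 := (hInv k).1
      have h1 : ((Stg k).1:ℝ) ≤ t * ((Stg k).1:ℝ) := by
        nlinarith [show (0:ℝ) ≤ ((Stg k).1:ℝ) by positivity]
      have h2 : (Stg k).1 ≤ ⌊t * ((Stg k).1:ℝ)⌋₊ := Nat.le_floor h1
      have h3 : idx k t = (Stg k).1 := by
        show min (Stg k).1 ⌊t * ((Stg k).1:ℝ)⌋₊ = (Stg k).1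
        omega
      show (Stg k).2 (idx k t) = b
      rw [h3]
      exact (hInv k).2.2.1 _ le_rfl
    have h4 : Tendsto (fun k => φ k t) atTop (𝓝 b) := by
      have : (fun k => φ k t) = fun _ => b := funext hφb
      rw [this]; exact tendsto_const_nhds
    exact tendsto_nhds_unique (hγ t) h4
  · intro t
    have h1 : dist (φ 0 t) a ≤ es 0 := hball0 (idx 0 t)
    have h2 : es 0 = ε/4 := by rw [hes]; norm_num
    calc dist (γ t) a ≤ dist (γ t) (φ 0 t) + dist (φ 0 t) a := dist_triangle _ _ _
      _ ≤ 2 * es 0 + es 0 := add_le_add (hlim 0 t) h1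
      _ ≤ ε := by rw [h2]; linarith



open Set Topology Metric Filter

variable {E : Type*} [MetricSpace E]

/-- gluing two generalized paths -/
lemma path_glue {a b c : E} {γ₁ γ₂ : ℝ → E} (h1 : Continuous γ₁) (h2 : Continuous γ₂)
    (h1a : ∀ t, t ≤ 0 → γ₁ t = a) (h1b : ∀ t, 1 ≤ t → γ₁ t = b)
    (h2b : ∀ t, t ≤ 0 → γ₂ t = b) (h2c : ∀ t, 1 ≤ t → γ₂ t = c) :
    ∃ γ : ℝ → E, Continuous γ ∧ (∀ t, t ≤ 0 → γ t = a) ∧ (∀ t, 1 ≤ t → γ t = c) := by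
  classical
  refine ⟨fun t => if t ≤ 1/2 then γ₁ (2*t) else γ₂ (2*t - 1), ?_, ?_, ?_⟩
  · apply Continuous.if_le (h1.comp (by continuity)) (h2.comp (by continuity))
      continuous_id continuous_const
    intro t ht
    have ht' : t = 1/2 := ht
    subst ht'
    show γ₁ (2 * (1/2)) = γ₂ (2 * (1/2) - 1)
    rw [show (2:ℝ) * (1/2) = 1 by norm_num, h1b 1 le_rfl, h2b (1 - 1) (by norm_num)]
  · intro t ht
    have : t ≤ 1/2 := by linarith
    simp only [this, if_pos]
    exact h1a _ (by linarith)
  · intro t ht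
    have : ¬ t ≤ 1/2 := by linarith
    simp only [this, if_neg, if_false]
    exact h2c _ (by linarith)

lemma joined_all [CompactSpace E] [LocallyConnectedSpace E] [ConnectedSpace E] :
    ∀ a b : E, ∃ γ : ℝ → E, Continuous γ ∧ (∀ t, t ≤ 0 → γ t = a) ∧ (∀ t, 1 ≤ t → γ t = b) := by
  rcases exists_small_path (E := E) 1 one_pos with ⟨δ0, hδ0, hP⟩
  intro a b
  rcases chain_of_preconnected isPreconnected_univ (mem_univ a) (mem_univ b) hδ0 with
    ⟨L, cc, hcc0, hccL, -, hccstep⟩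
  have key : ∀ i, i ≤ L → ∃ γ : ℝ → E, Continuous γ ∧ (∀ t, t ≤ 0 → γ t = a) ∧
      (∀ t, 1 ≤ t → γ t = cc i) := by
    intro i
    induction i with
    | zero => exact fun _ => ⟨fun _ => a, continuous_const, fun _ _ => rfl, fun _ _ => hcc0.symm⟩
    | succ i ih =>
      intro hi
      rcases ih (by omega) with ⟨γ₁, hγ₁, h1a, h1b⟩
      rcases hP (cc i) (cc (i+1)) (hccstep i (by omega)) with ⟨γ₂, hγ₂, h2a, h2b, -⟩
      exact path_glue hγ₁ hγ₂ h1a h1b h2a h2b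
  rcases key L le_rfl with ⟨γ, h1, h2, h3⟩
  exact ⟨γ, h1, h2, fun t ht => by rw [h3 t ht, hccL]⟩

/-- Master path data: a uniform family of paths with diameter control. -/
lemma exists_path_data [CompactSpace E] [LocallyConnectedSpace E] [ConnectedSpace E] :
    ∃ (Pi : E → E → ℝ → E) (δP : ℕ → ℝ),
      (∀ k, 0 < δP k) ∧ (∀ k, δP k ≤ (1/2:ℝ)^k) ∧ (∀ k, δP (k+1) ≤ δP k) ∧
      (∀ w w', Continuous (Pi w w')) ∧
      (∀ w w' t, t ≤ 0 → Pi w w' t = w) ∧ (∀ w w' t, 1 ≤ t → Pi w w' t = w') ∧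
      (∀ k w w' t, dist w w' < δP k → dist (Pi w w' t) w ≤ (1/2:ℝ)^k) := by
  classical
  have hsp : ∀ k : ℕ, ∃ δ, 0 < δ ∧ ∀ x y : E, dist x y < δ →
      ∃ γ : ℝ → E, Continuous γ ∧ (∀ t, t ≤ 0 → γ t = x) ∧ (∀ t, 1 ≤ t → γ t = y) ∧
        ∀ t, dist (γ t) x ≤ (1/2:ℝ)^k := by
    intro k
    rcases exists_small_path (E := E) ((1/2:ℝ)^k) (by positivity) with ⟨δ, hδ, hP⟩
    exact ⟨δ, hδ, hP⟩
  choose d hd0 hdP using hsp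
  set δP : ℕ → ℝ := fun k => Nat.rec (min (d 0) 1) (fun k ih => min (min (d (k+1)) ((1/2:ℝ)^(k+1))) ih) k
    with hδPdef
  have hδPsucc : ∀ k, δP (k+1) = min (min (d (k+1)) ((1/2:ℝ)^(k+1))) (δP k) := fun k => rfl
  have hδP0 : ∀ k, 0 < δP k := by
    intro k; induction k with
    | zero => exact lt_min (hd0 0) one_pos
    | succ k ih => rw [hδPsucc]; exact lt_min (lt_min (hd0 (k+1)) (by positivity)) ih
  have hδPd : ∀ k, δP k ≤ d k := by
    intro k; cases k with
    | zero => exact min_le_left (d 0) 1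
    | succ k => rw [hδPsucc]; exact le_trans (min_le_left _ _) (min_le_left _ _)
  have hδPle : ∀ k, δP k ≤ (1/2:ℝ)^k := by
    intro k; cases k with
    | zero =>
        show min (d 0) 1 ≤ (1/2:ℝ)^0
        rw [pow_zero]; exact min_le_right _ _
    | succ k => rw [hδPsucc]; exact le_trans (min_le_left _ _) (min_le_right _ _)
  have hδPmono : ∀ k, δP (k+1) ≤ δP k := by
    intro k; rw [hδPsucc]; exact min_le_right _ _
  have hanti : Antitone δP := antitone_nat_of_succ_le hδPmono
  have main : ∀ w w' : E, ∃ γ : ℝ → E, Continuous γ ∧ (∀ t, t ≤ 0 → γ t = w) ∧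
      (∀ t, 1 ≤ t → γ t = w') ∧ ∀ k t, dist w w' < δP k → dist (γ t) w ≤ (1/2:ℝ)^k := by
    intro w w'
    by_cases hex : ∃ k, δP k ≤ dist w w'
    · have hspec : δP (Nat.find hex) ≤ dist w w' := Nat.find_spec hex
      by_cases hk0 : Nat.find hex = 0
      · rcases joined_all w w' with ⟨γ, h1, h2⟩
        refine ⟨γ, h1, h2.1, h2.2, fun k t hk => absurd hk (not_lt.2 ?_)⟩
        calc δP k ≤ δP (Nat.find hex) := hanti (by omega)
          _ ≤ dist w w' := hspec
      · have hk1 : Nat.find hex - 1 < Nat.find hex := by omega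
        have hlt : dist w w' < δP (Nat.find hex - 1) := not_le.1 (Nat.find_min hex hk1)
        have hlt' : dist w w' < d (Nat.find hex - 1) := lt_of_lt_of_le hlt (hδPd _)
        rcases hdP (Nat.find hex - 1) w w' hlt' with ⟨γ, h1, h2, h3, h4⟩
        refine ⟨γ, h1, h2, h3, fun k t hk => ?_⟩
        have hklt : k < Nat.find hex := by
          by_contra h
          push_neg at h
          exact absurd hk (not_lt.2 ((hanti h).trans hspec))
        have hkle : k ≤ Nat.find hex - 1 := by omega
        calc dist (γ t) w ≤ (1/2:ℝ)^(Nat.find hex - 1) := h4 t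
          _ ≤ (1/2:ℝ)^k := pow_le_pow_of_le_one (by norm_num) (by norm_num) hkle
    · push_neg at hex
      have hww : w = w' := by
        have ht : Tendsto (fun k : ℕ => (1/2:ℝ)^k) atTop (𝓝 0) :=
          tendsto_pow_atTop_nhds_zero_of_lt_one (by norm_num) (by norm_num)
        have h0 : dist w w' ≤ 0 :=
          ge_of_tendsto' ht fun k => le_of_lt (lt_of_lt_of_le (hex k) (hδPle k))
        exact dist_le_zero.1 h0
      subst hww
      exact ⟨fun _ => w, continuous_const, fun _ _ => rfl, fun _ _ => rfl,
        fun k t _ => by rw [dist_self]; positivity⟩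
  choose Pi h1 h2 h3 h4 using main
  exact ⟨Pi, δP, hδP0, hδPle, hδPmono, h1, h2, h3, fun k w w' t h => h4 w w' k t h⟩




variable {X : Type*} [MetricSpace X] {Y : Set X}

set_option maxHeartbeats 1600000 in
/-- The main one-step extension lemma. -/
lemma step_extend
    (hYne : Y.Nonempty)
    (proj : X → X) (hprojY : ∀ x, proj x ∈ Y) (hprojd : ∀ x, dist x (proj x) = infDist x Y)
    (Pi : X → X → ℝ → X) (δP : ℕ → ℝ) (hδPpos : ∀ k, 0 < δP k)
    (hPicont : ∀ w w', Continuous (Pi w w'))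
    (hPiY : ∀ w w' t, w ∈ Y → w' ∈ Y → Pi w w' t ∈ Y)
    (hPi0 : ∀ w w' t, w ∈ Y → w' ∈ Y → t ≤ 0 → Pi w w' t = w)
    (hPi1 : ∀ w w' t, w ∈ Y → w' ∈ Y → 1 ≤ t → Pi w w' t = w')
    (hPismall : ∀ k w w' t, w ∈ Y → w' ∈ Y → dist w w' < δP k →
      dist (Pi w w' t) w ≤ (1/2:ℝ)^k)
    {C C' : Set ℝ} {fS : ℝ → X} {a θ e q : ℝ}
    (hCC' : C ⊆ C') (hCcomp : IsCompact C) (hC'comp : IsCompact C')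
    (hfcont : ContinuousOn fS C')
    (hθ : 0 < θ) (he : 0 < e) (hq0 : 0 ≤ q) (ha : 0 < a)
    (hunif : ∀ s ∈ C', ∀ s' ∈ C', |s - s'| ≤ 9*θ → dist (fS s) (fS s') ≤ e)
    (hCg : ∀ s ∈ C, a ≤ infDist (fS s) Y)
    (hCdef : ∀ s ∈ C', a ≤ infDist (fS s) Y → s ∈ C)
    {ρC : ℝ → X}
    (hρcont : ContinuousOn ρC C)
    (hρY : ∀ s ∈ C, ρC s ∈ Y)
    (hρq : ∀ s ∈ C, infDist (fS s) Y ≤ a + 4*e → dist (ρC s) (fS s) ≤ q) :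
    ∃ ρ' : ℝ → X,
      (∀ s ∈ C, ρ' s = ρC s) ∧
      ContinuousOn ρ' C' ∧
      (∀ s, ρ' s ∈ Y) ∧
      (∀ s ∈ C', s ∉ C → ∀ k : ℕ, 2 * max q (a+e) + 2*e < δP k →
        dist (ρ' s) (fS s) ≤ (1/2:ℝ)^k + max q (a+e) + e) ∧
      (∀ s ∈ C', s ∉ C → ∀ k : ℕ, infDist (fS s) Y ≤ a - 4*e →
        2 * infDist (fS s) Y + 4*e < δP k →
        dist (ρ' s) (fS s) ≤ infDist (fS s) Y + 2*e + (1/2:ℝ)^k) := by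
  classical
  obtain ⟨y₀, hy₀⟩ := hYne
  -- finite θ-net of C'
  obtain ⟨P, hPsub, hPfin, hPnet⟩ :
      ∃ P : Set ℝ, P ⊆ C' ∧ P.Finite ∧ ∀ s ∈ C', ∃ p ∈ P, |s - p| < θ := by
    obtain ⟨P, hPsub, hPfin, hPcov⟩ := hC'comp.elim_finite_subcover_image
      (b := C') (c := fun p => ball p θ) (fun p _ => isOpen_ball)
      (fun s hs => mem_iUnion₂.2 ⟨s, hs, mem_ball_self hθ⟩)
    refine ⟨P, hPsub, hPfin, fun s hs => ?_⟩
    rcases mem_iUnion₂.1 (hPcov hs) with ⟨p, hp, hsp⟩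
    exact ⟨p, hp, by rwa [mem_ball, Real.dist_eq] at hsp⟩
  -- nodes
  set P2 : Set ℝ := {p ∈ P | ∀ c ∈ C, θ ≤ |p - c|} with hP2
  set N : Set ℝ := C ∪ P2 with hN
  have hP2fin : P2.Finite := hPfin.subset (sep_subset _ _)
  have hNclosed : IsClosed N := hCcomp.isClosed.union hP2fin.isClosed
  have hNsub : N ⊆ C' := union_subset hCC' (fun p hp => hPsub hp.1)
  -- node values
  set w : ℝ → X := fun p => if p ∈ C then ρC p else proj (fS p) with hw
  have hwC : ∀ p ∈ C, w p = ρC p := fun p hp => by rw [hw]; simp [hp]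
  have hwP : ∀ p, p ∉ C → w p = proj (fS p) := fun p hp => by rw [hw]; simp [hp]
  have hwY : ∀ p, w p ∈ Y := by
    intro p
    by_cases hp : p ∈ C
    · rw [hwC p hp]; exact hρY p hp
    · rw [hwP p hp]; exact hprojY _
  -- plateau parameters
  set mmf : ℝ → ℝ → ℝ := fun u v => min (3*θ) ((v-u)/3) with hmmf
  set τf : ℝ → ℝ → ℝ → ℝ := fun u v s => (s - u - mmf u v) / (v - u - 2 * mmf u v) with hτf
  -- the new map
  set ρ' : ℝ → X := fun s =>
    if s ∈ N then w s
    else if (N ∩ Iic s).Nonempty then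
      if (N ∩ Ici s).Nonempty then
        Pi (w (sSup (N ∩ Iic s))) (w (sInf (N ∩ Ici s))) (τf (sSup (N ∩ Iic s)) (sInf (N ∩ Ici s)) s)
      else w (sSup (N ∩ Iic s))
    else if (N ∩ Ici s).Nonempty then w (sInf (N ∩ Ici s)) else y₀ with hρ'
  -- basic facts about sSup/sInf of node sets
  have hsupf : ∀ s : ℝ, (N ∩ Iic s).Nonempty → sSup (N ∩ Iic s) ∈ N ∧ sSup (N ∩ Iic s) ≤ s ∧
      ∀ n ∈ N, n ≤ s → n ≤ sSup (N ∩ Iic s) := by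
    intro s h
    have hcl : IsClosed (N ∩ Iic s) := hNclosed.inter isClosed_Iic
    have hbdd : BddAbove (N ∩ Iic s) := ⟨s, fun x hx => hx.2⟩
    have hmem := hcl.csSup_mem h hbdd
    exact ⟨hmem.1, hmem.2, fun n hn hns => le_csSup hbdd ⟨hn, hns⟩⟩
  have hinff : ∀ s : ℝ, (N ∩ Ici s).Nonempty → sInf (N ∩ Ici s) ∈ N ∧ s ≤ sInf (N ∩ Ici s) ∧
      ∀ n ∈ N, s ≤ n → sInf (N ∩ Ici s) ≤ n := by
    intro s h
    have hcl : IsClosed (N ∩ Ici s) := hNclosed.inter isClosed_Ici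
    have hbdd : BddBelow (N ∩ Ici s) := ⟨s, fun x hx => hx.2⟩
    have hmem := hcl.csInf_mem h hbdd
    exact ⟨hmem.1, hmem.2, fun n hn hns => csInf_le hbdd ⟨hn, hns⟩⟩
  have hglt : ∀ s ∈ C', s ∉ C → infDist (fS s) Y < a := by
    intro s hs hsC
    by_contra h
    exact hsC (hCdef s hs (not_lt.1 h))
  have hgvar : ∀ s ∈ C', ∀ n ∈ C', |s - n| ≤ 9*θ →
      infDist (fS n) Y ≤ infDist (fS s) Y + e := by
    intro s hs n hn hsn
    calc infDist (fS n) Y ≤ infDist (fS s) Y + dist (fS n) (fS s) := infDist_le_infDist_add_dist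
      _ ≤ infDist (fS s) Y + e := by
          have h2 := hunif n hn s hs (by rw [abs_sub_comm]; exact hsn)
          linarith
  have hnodeErr : ∀ s ∈ C', s ∉ C → ∀ n ∈ N, |s - n| ≤ 9*θ →
      dist (w n) (fS n) ≤ max q (a + e) := by
    intro s hs hsC n hn hsn
    have hnC' : n ∈ C' := hNsub hn
    by_cases hnc : n ∈ C
    · rw [hwC n hnc]
      refine le_trans (hρq n hnc ?_) (le_max_left _ _)
      have h1 := hgvar s hs n hnC' hsn
      have h2 := hglt s hs hsC
      linarith
    · rw [hwP n hnc, dist_comm, hprojd]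
      refine le_trans (hgvar s hs n hnC' hsn) (le_trans ?_ (le_max_right _ _))
      have h2 := hglt s hs hsC
      linarith
  have hnodeDeep : ∀ s ∈ C', infDist (fS s) Y ≤ a - 4*e → ∀ n ∈ N, |s - n| ≤ 9*θ →
      n ∉ C ∧ dist (w n) (fS n) ≤ infDist (fS s) Y + e := by
    intro s hs hg n hn hsn
    have hnC' : n ∈ C' := hNsub hn
    have hgn : infDist (fS n) Y ≤ infDist (fS s) Y + e := hgvar s hs n hnC' hsn
    have hnc : n ∉ C := by
      intro hnc
      have h2 := hCg n hnc
      linarith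
    refine ⟨hnc, ?_⟩
    rw [hwP n hnc, dist_comm, hprojd]
    exact hgn
  have hnear : ∀ s ∈ C', s ∉ C → ∃ n ∈ N, |s - n| ≤ 2*θ := by
    intro s hs hsC
    obtain ⟨p, hp, hsp⟩ := hPnet s hs
    by_cases hQ : ∀ c ∈ C, θ ≤ |p - c|
    · exact ⟨p, Or.inr ⟨hp, hQ⟩, by linarith [le_of_lt hsp]⟩
    · push_neg at hQ
      obtain ⟨c, hc, hpc⟩ := hQ
      refine ⟨c, Or.inl hc, ?_⟩
      calc |s - c| ≤ |s - p| + |p - c| := abs_sub_le _ _ _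
        _ ≤ 2*θ := by linarith
  have hval : ∀ s, s ∉ N → (N ∩ Iic s).Nonempty → (N ∩ Ici s).Nonempty →
      ρ' s = Pi (w (sSup (N ∩ Iic s))) (w (sInf (N ∩ Ici s)))
        (τf (sSup (N ∩ Iic s)) (sInf (N ∩ Ici s)) s) := by
    intro s hs h1 h2
    simp only [hρ', if_neg hs, if_pos h1, if_pos h2]
  have hbasic : ∀ s, s ∉ N → (N ∩ Iic s).Nonempty → (N ∩ Ici s).Nonempty →
      sSup (N ∩ Iic s) < s ∧ s < sInf (N ∩ Ici s) := by
    intro s hs h1 h2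
    obtain ⟨hu1, hu2, -⟩ := hsupf s h1
    obtain ⟨hv1, hv2, -⟩ := hinff s h2
    constructor
    · rcases eq_or_lt_of_le hu2 with h|h
      · exact absurd (h ▸ hu1) hs
      · exact h
    · rcases eq_or_lt_of_le hv2 with h|h
      · exact absurd (h ▸ hv1) hs
      · exact h
  have hmm_facts : ∀ u v : ℝ, u < v → 0 < mmf u v ∧ mmf u v ≤ (v-u)/3 ∧
      (v-u)/3 ≤ v - u - 2 * mmf u v := by
    intro u v huv
    have h1 : 0 < mmf u v := lt_min (by linarith) (by linarith)
    have h2 : mmf u v ≤ (v-u)/3 := min_le_right _ _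
    exact ⟨h1, h2, by linarith⟩
  have hplatL : ∀ s, s ∉ N → ∀ h1 : (N ∩ Iic s).Nonempty, ∀ h2 : (N ∩ Ici s).Nonempty,
      s ≤ sSup (N ∩ Iic s) + mmf (sSup (N ∩ Iic s)) (sInf (N ∩ Ici s)) →
      ρ' s = w (sSup (N ∩ Iic s)) := by
    intro s hs h1 h2 hsle
    rw [hval s hs h1 h2]
    apply hPi0 _ _ _ (hwY _) (hwY _)
    obtain ⟨hu, hv⟩ := hbasic s hs h1 h2
    obtain ⟨hm1, hm2, hm3⟩ := hmm_facts _ _ (lt_trans hu hv)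
    exact div_nonpos_iff.2 (Or.inr ⟨by linarith, by linarith⟩)
  have hplatR : ∀ s, s ∉ N → ∀ h1 : (N ∩ Iic s).Nonempty, ∀ h2 : (N ∩ Ici s).Nonempty,
      sInf (N ∩ Ici s) - mmf (sSup (N ∩ Iic s)) (sInf (N ∩ Ici s)) ≤ s →
      ρ' s = w (sInf (N ∩ Ici s)) := by
    intro s hs h1 h2 hsle
    rw [hval s hs h1 h2]
    apply hPi1 _ _ _ (hwY _) (hwY _)
    obtain ⟨hu, hv⟩ := hbasic s hs h1 h2
    obtain ⟨hm1, hm2, hm3⟩ := hmm_facts _ _ (lt_trans hu hv)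
    rw [le_div_iff₀ (by linarith)]
    linarith
  -- structural dichotomy for points of the gap
  have herr : ∀ s ∈ C', s ∉ C → s ∉ N →
      (∃ n ∈ N, |s - n| ≤ 3*θ ∧ ρ' s = w n) ∨
      (∃ n1 ∈ N, ∃ n2 ∈ N, |s - n1| ≤ 9*θ ∧ |s - n2| ≤ 9*θ ∧ n1 < s ∧ s < n2 ∧
        ρ' s = Pi (w n1) (w n2) (τf n1 n2 s)) := by
    intro s hs hsC hsN
    obtain ⟨n₀, hn₀, hn₀d⟩ := hnear s hs hsC
    by_cases h1 : (N ∩ Iic s).Nonempty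
    · by_cases h2 : (N ∩ Ici s).Nonempty
      · obtain ⟨huN, -, husup⟩ := hsupf s h1
        obtain ⟨hvN, -, hvinf⟩ := hinff s h2
        obtain ⟨hu, hv⟩ := hbasic s hsN h1 h2
        obtain ⟨hm1, hm2, hm3⟩ := hmm_facts _ _ (lt_trans hu hv)
        set u := sSup (N ∩ Iic s)
        set v := sInf (N ∩ Ici s)
        by_cases hpl : s ≤ u + mmf u v
        · left
          refine ⟨u, huN, ?_, hplatL s hsN h1 h2 hpl⟩
          have hm4 : mmf u v ≤ 3*θ := min_le_left _ _
          rw [abs_of_pos (by linarith : (0:ℝ) < s - u)]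
          linarith
        · by_cases hpr : v - mmf u v ≤ s
          · left
            refine ⟨v, hvN, ?_, hplatR s hsN h1 h2 hpr⟩
            have hm4 : mmf u v ≤ 3*θ := min_le_left _ _
            rw [abs_of_neg (by linarith : s - v < 0)]
            linarith
          · right
            push_neg at hpl hpr
            -- off plateau: gap is short
            have hmm_small : mmf u v < 2*θ := by
              rcases (lt_or_ge n₀ s) with hns | hns
              · have hnu : n₀ ≤ u := husup n₀ hn₀ (le_of_lt hns)
                have : s - n₀ ≤ 2*θ := by
                  rw [abs_of_pos (by linarith : (0:ℝ) < s - n₀)] at hn₀d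
                  linarith
                linarith
              · have hnv : v ≤ n₀ := hvinf n₀ hn₀ hns
                have : n₀ - s ≤ 2*θ := by
                  rw [abs_of_nonpos (by linarith : s - n₀ ≤ 0)] at hn₀d
                  linarith
                linarith
            have hmm_eq : mmf u v = (v - u)/3 := by
              rcases min_cases (3*θ) ((v-u)/3) with ⟨h, -⟩ | ⟨h, -⟩
              · exfalso
                have h5 : mmf u v = 3*θ := h
                linarith
              · exact h
            have hvu : v - u < 6*θ := by
              have : (v-u)/3 < 2*θ := hmm_eq ▸ hmm_small
              linarith
            refine ⟨u, huN, v, hvN, ?_, ?_, hu, hv, hval s hsN h1 h2⟩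
            · rw [abs_of_pos (by linarith : (0:ℝ) < s - u)]
              linarith
            · rw [abs_of_neg (by linarith : s - v < 0)]
              linarith
      · -- right empty
        left
        obtain ⟨huN, hu2, husup⟩ := hsupf s h1
        have hρval : ρ' s = w (sSup (N ∩ Iic s)) := by
          simp only [hρ', if_neg hsN, if_pos h1, if_neg h2]
        have hns : n₀ ≤ s := by
          by_contra hlt
          push_neg at hlt
          exact h2 ⟨n₀, hn₀, le_of_lt hlt⟩
        have hnu : n₀ ≤ sSup (N ∩ Iic s) := husup n₀ hn₀ hns
        refine ⟨sSup (N ∩ Iic s), huN, ?_, hρval⟩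
        rw [abs_of_nonneg (by linarith : (0:ℝ) ≤ s - sSup (N ∩ Iic s))]
        rw [abs_of_nonneg (by linarith : (0:ℝ) ≤ s - n₀)] at hn₀d
        linarith
    · -- left empty
      left
      have h2 : (N ∩ Ici s).Nonempty := by
        rcases (le_or_gt s n₀) with hns | hns
        · exact ⟨n₀, hn₀, hns⟩
        · exact absurd ⟨n₀, hn₀, le_of_lt hns⟩ h1
      obtain ⟨hvN, hv2, hvinf⟩ := hinff s h2
      have hρval : ρ' s = w (sInf (N ∩ Ici s)) := by
        simp only [hρ', if_neg hsN, if_neg h1, if_pos h2]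
      have hns : s ≤ n₀ := by
        by_contra hlt
        push_neg at hlt
        exact h1 ⟨n₀, hn₀, le_of_lt hlt⟩
      have hnv : sInf (N ∩ Ici s) ≤ n₀ := hvinf n₀ hn₀ hns
      refine ⟨sInf (N ∩ Ici s), hvN, ?_, hρval⟩
      rw [abs_of_nonpos (by linarith : s - sInf (N ∩ Ici s) ≤ 0)]
      rw [abs_of_nonpos (by linarith : s - n₀ ≤ 0)] at hn₀d
      linarith
  have hρval_mem : ∀ s, ρ' s ∈ Y := by
    intro s
    simp only [hρ']
    split_ifs
    · exact hwY s
    · exact hPiY _ _ _ (hwY _) (hwY _)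
    · exact hwY _
    · exact hwY _
    · exact hy₀
  have hO1 : ∀ s ∈ C, ρ' s = ρC s := by
    intro s hs
    have hsN : s ∈ N := Or.inl hs
    have h1 : ρ' s = w s := by simp only [hρ', if_pos hsN]
    rw [h1]
    exact hwC s hs
  have hO4 : ∀ s ∈ C', s ∉ C → ∀ k : ℕ, 2 * max q (a+e) + 2*e < δP k →
      dist (ρ' s) (fS s) ≤ (1/2:ℝ)^k + max q (a+e) + e := by
    intro s hs hsC k hk
    have hpow : (0:ℝ) ≤ (1/2:ℝ)^k := by positivity
    by_cases hsN : s ∈ N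
    · have hv : ρ' s = w s := by simp only [hρ', if_pos hsN]
      rw [hv, hwP s hsC, dist_comm, hprojd]
      have h1 := hglt s hs hsC
      have h2 : a ≤ max q (a+e) := le_trans (by linarith) (le_max_right _ _)
      linarith
    · rcases herr s hs hsC hsN with ⟨n, hn, hnd, hveq⟩ | ⟨n1, hn1, n2, hn2, hd1, hd2, -, -, hveq⟩
      · rw [hveq]
        have h1 := hnodeErr s hs hsC n hn (by linarith)
        have h2 : dist (fS n) (fS s) ≤ e := hunif n (hNsub hn) s hs (by rw [abs_sub_comm]; linarith)
        calc dist (w n) (fS s) ≤ dist (w n) (fS n) + dist (fS n) (fS s) := dist_triangle _ _ _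
          _ ≤ max q (a+e) + e := add_le_add h1 h2
          _ ≤ (1/2:ℝ)^k + max q (a+e) + e := by linarith
      · rw [hveq]
        have e1 := hnodeErr s hs hsC n1 hn1 hd1
        have e2 := hnodeErr s hs hsC n2 hn2 hd2
        have f1 : dist (fS n1) (fS s) ≤ e := hunif n1 (hNsub hn1) s hs (by rw [abs_sub_comm]; exact hd1)
        have f2 : dist (fS n2) (fS s) ≤ e := hunif n2 (hNsub hn2) s hs (by rw [abs_sub_comm]; exact hd2)
        have g1 : dist (w n1) (fS s) ≤ max q (a+e) + e := by
          calc dist (w n1) (fS s) ≤ dist (w n1) (fS n1) + dist (fS n1) (fS s) := dist_triangle _ _ _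
            _ ≤ _ := add_le_add e1 f1
        have g2 : dist (w n2) (fS s) ≤ max q (a+e) + e := by
          calc dist (w n2) (fS s) ≤ dist (w n2) (fS n2) + dist (fS n2) (fS s) := dist_triangle _ _ _
            _ ≤ _ := add_le_add e2 f2
        have hww : dist (w n1) (w n2) < δP k := by
          calc dist (w n1) (w n2) ≤ dist (w n1) (fS s) + dist (fS s) (w n2) := dist_triangle _ _ _
            _ = dist (w n1) (fS s) + dist (w n2) (fS s) := by rw [dist_comm (fS s)]
            _ ≤ (max q (a+e) + e) + (max q (a+e) + e) := add_le_add g1 g2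
            _ = 2 * max q (a+e) + 2*e := by ring
            _ < δP k := hk
        have hsm := hPismall k (w n1) (w n2) (τf n1 n2 s) (hwY n1) (hwY n2) hww
        calc dist (Pi (w n1) (w n2) (τf n1 n2 s)) (fS s)
            ≤ dist (Pi (w n1) (w n2) (τf n1 n2 s)) (w n1) + dist (w n1) (fS s) := dist_triangle _ _ _
          _ ≤ (1/2:ℝ)^k + (max q (a+e) + e) := add_le_add hsm g1
          _ = (1/2:ℝ)^k + max q (a+e) + e := by ring
  have hO5 : ∀ s ∈ C', s ∉ C → ∀ k : ℕ, infDist (fS s) Y ≤ a - 4*e →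
      2 * infDist (fS s) Y + 4*e < δP k →
      dist (ρ' s) (fS s) ≤ infDist (fS s) Y + 2*e + (1/2:ℝ)^k := by
    intro s hs hsC k hdeep hk
    have hpow : (0:ℝ) ≤ (1/2:ℝ)^k := by positivity
    by_cases hsN : s ∈ N
    · have hv : ρ' s = w s := by simp only [hρ', if_pos hsN]
      rw [hv, hwP s hsC, dist_comm, hprojd]
      linarith
    · rcases herr s hs hsC hsN with ⟨n, hn, hnd, hveq⟩ | ⟨n1, hn1, n2, hn2, hd1, hd2, -, -, hveq⟩
      · rw [hveq]
        obtain ⟨-, h1⟩ := hnodeDeep s hs hdeep n hn (by linarith)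
        have h2 : dist (fS n) (fS s) ≤ e := hunif n (hNsub hn) s hs (by rw [abs_sub_comm]; linarith)
        calc dist (w n) (fS s) ≤ dist (w n) (fS n) + dist (fS n) (fS s) := dist_triangle _ _ _
          _ ≤ (infDist (fS s) Y + e) + e := add_le_add h1 h2
          _ ≤ infDist (fS s) Y + 2*e + (1/2:ℝ)^k := by linarith
      · rw [hveq]
        obtain ⟨-, e1⟩ := hnodeDeep s hs hdeep n1 hn1 hd1
        obtain ⟨-, e2⟩ := hnodeDeep s hs hdeep n2 hn2 hd2
        have f1 : dist (fS n1) (fS s) ≤ e := hunif n1 (hNsub hn1) s hs (by rw [abs_sub_comm]; exact hd1)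
        have f2 : dist (fS n2) (fS s) ≤ e := hunif n2 (hNsub hn2) s hs (by rw [abs_sub_comm]; exact hd2)
        have g1 : dist (w n1) (fS s) ≤ infDist (fS s) Y + 2*e := by
          calc dist (w n1) (fS s) ≤ dist (w n1) (fS n1) + dist (fS n1) (fS s) := dist_triangle _ _ _
            _ ≤ (infDist (fS s) Y + e) + e := add_le_add e1 f1
            _ = infDist (fS s) Y + 2*e := by ring
        have g2 : dist (w n2) (fS s) ≤ infDist (fS s) Y + 2*e := by
          calc dist (w n2) (fS s) ≤ dist (w n2) (fS n2) + dist (fS n2) (fS s) := dist_triangle _ _ _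
            _ ≤ (infDist (fS s) Y + e) + e := add_le_add e2 f2
            _ = infDist (fS s) Y + 2*e := by ring
        have hww : dist (w n1) (w n2) < δP k := by
          calc dist (w n1) (w n2) ≤ dist (w n1) (fS s) + dist (fS s) (w n2) := dist_triangle _ _ _
            _ = dist (w n1) (fS s) + dist (w n2) (fS s) := by rw [dist_comm (fS s)]
            _ ≤ (infDist (fS s) Y + 2*e) + (infDist (fS s) Y + 2*e) := add_le_add g1 g2
            _ = 2 * infDist (fS s) Y + 4*e := by ring
            _ < δP k := hk
        have hsm := hPismall k (w n1) (w n2) (τf n1 n2 s) (hwY n1) (hwY n2) hww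
        calc dist (Pi (w n1) (w n2) (τf n1 n2 s)) (fS s)
            ≤ dist (Pi (w n1) (w n2) (τf n1 n2 s)) (w n1) + dist (w n1) (fS s) := dist_triangle _ _ _
          _ ≤ (1/2:ℝ)^k + (infDist (fS s) Y + 2*e) := add_le_add hsm g1
          _ ≤ infDist (fS s) Y + 2*e + (1/2:ℝ)^k := by linarith
  refine ⟨ρ', hO1, ?_, hρval_mem, hO4, hO5⟩
  -- extra value lemmas
  have hvalN : ∀ s ∈ N, ρ' s = w s := by
    intro s hs
    simp only [hρ', if_pos hs]
  have hvalL : ∀ s, s ∉ N → (N ∩ Iic s).Nonempty → ¬(N ∩ Ici s).Nonempty →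
      ρ' s = w (sSup (N ∩ Iic s)) := by
    intro s hs h1 h2
    simp only [hρ', if_neg hs, if_pos h1, if_neg h2]
  have hvalR : ∀ s, s ∉ N → ¬(N ∩ Iic s).Nonempty → (N ∩ Ici s).Nonempty →
      ρ' s = w (sInf (N ∩ Ici s)) := by
    intro s hs h1 h2
    simp only [hρ', if_neg hs, if_neg h1, if_pos h2]
  have hvalE : ∀ s, s ∉ N → ¬(N ∩ Iic s).Nonempty → ¬(N ∩ Ici s).Nonempty → ρ' s = y₀ := by
    intro s hs h1 h2
    simp only [hρ', if_neg hs, if_neg h1, if_neg h2]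
  -- continuity
  intro s₀ hs₀'
  by_cases hs₀N : s₀ ∈ N
  · by_cases hs₀C : s₀ ∈ C
    · -- Case C: point of C (accumulation case)
      rw [Metric.continuousWithinAt_iff]
      intro ε' hε'
      obtain ⟨k, hk⟩ : ∃ k : ℕ, (1/2:ℝ)^k < ε'/3 :=
        exists_pow_lt_of_lt_one (by linarith) (by norm_num)
      set ε₁ : ℝ := min (ε'/3) (δP k / 2) with hε₁
      have hε₁pos : 0 < ε₁ := lt_min (by linarith) (by linarith [hδPpos k])
      have hwc := hρcont s₀ hs₀C
      rw [Metric.continuousWithinAt_iff] at hwc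
      obtain ⟨δ₁, hδ₁, hδ₁P⟩ := hwc ε₁ hε₁pos
      have hs₀P2 : s₀ ∉ P2 := by
        rintro ⟨-, hQ⟩
        have h5 := hQ s₀ hs₀C
        simp only [sub_self, abs_zero] at h5
        linarith
      obtain ⟨t, ht, hballt⟩ := Metric.mem_nhds_iff.1 (hP2fin.isClosed.isOpen_compl.mem_nhds hs₀P2)
      have hP2far : ∀ p ∈ P2, ¬ |p - s₀| < t := by
        intro p hp hcon
        exact hballt (by rwa [mem_ball, Real.dist_eq]) hp
      set δ' : ℝ := min (min (δ₁/5) (t/5)) (3*θ) with hδ'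
      have hδ'pos : 0 < δ' := lt_min (lt_min (by linarith) (by linarith)) (by linarith)
      have hδ'δ₁ : δ' ≤ δ₁/5 := le_trans (min_le_left _ _) (min_le_left _ _)
      have hδ't : δ' ≤ t/5 := le_trans (min_le_left _ _) (min_le_right _ _)
      have hδ'θ : δ' ≤ 3*θ := min_le_right _ _
      refine ⟨δ', hδ'pos, ?_⟩
      intro s hsC' hd
      rw [Real.dist_eq] at hd
      have hρ's₀ : ρ' s₀ = ρC s₀ := hO1 s₀ hs₀C
      have hε₁ε' : ε₁ ≤ ε'/3 := min_le_left _ _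
      have hε₁δP : ε₁ ≤ δP k / 2 := min_le_right _ _
      have hgood : ∀ n ∈ N, |n - s₀| ≤ 4*δ' → n ∈ C ∧ dist (ρC n) (ρC s₀) < ε₁ := by
        intro n hn hd4
        have hnt : |n - s₀| < t := lt_of_le_of_lt hd4 (by linarith)
        have hnC : n ∈ C := by
          rcases hn with h | h
          · exact h
          · exact absurd hnt (hP2far n h)
        refine ⟨hnC, hδ₁P hnC ?_⟩
        rw [Real.dist_eq]
        linarith [hd4]
      by_cases hsC : s ∈ C
      · rw [hO1 s hsC, hρ's₀]
        have h5 := hδ₁P hsC (by rw [Real.dist_eq]; linarith)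
        linarith
      · have hsP2 : s ∉ P2 := by
          intro h
          exact hP2far s h (by linarith)
        have hsN : s ∉ N := by
          rintro (h | h)
          · exact hsC h
          · exact hsP2 h
        have hne : s ≠ s₀ := fun h => hsC (h ▸ hs₀C)
        obtain ⟨hdl, hdr⟩ := abs_lt.1 hd
        rcases lt_or_gt_of_ne hne with hlt | hgt
        · -- s < s₀
          have h2 : (N ∩ Ici s).Nonempty := ⟨s₀, Or.inl hs₀C, le_of_lt hlt⟩
          have hv := hinff s h2
          have hvle : sInf (N ∩ Ici s) ≤ s₀ := hv.2.2 s₀ (Or.inl hs₀C) (le_of_lt hlt)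
          have hvges : s ≤ sInf (N ∩ Ici s) := hv.2.1
          have hvd : |sInf (N ∩ Ici s) - s₀| ≤ 4*δ' := by
            rw [abs_of_nonpos (by linarith)]
            linarith
          obtain ⟨hvC, hvclose⟩ := hgood _ hv.1 hvd
          by_cases h1 : (N ∩ Iic s).Nonempty
          · have hu := hsupf s h1
            have hus : sSup (N ∩ Iic s) ≤ s := hu.2.1
            have huslt : sSup (N ∩ Iic s) < s := by
              rcases eq_or_lt_of_le hus with h5 | h5
              · exact absurd (h5 ▸ hu.1) hsN
              · exact h5
            have hsvlt : s < sInf (N ∩ Ici s) := by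
              rcases eq_or_lt_of_le hvges with h5 | h5
              · exact absurd (h5 ▸ hv.1) hsN
              · exact h5
            have huv : sSup (N ∩ Iic s) < sInf (N ∩ Ici s) := lt_trans huslt hsvlt
            obtain ⟨hm1, hm2, hm3⟩ := hmm_facts _ _ huv
            by_cases hpr : sInf (N ∩ Ici s) - mmf (sSup (N ∩ Iic s)) (sInf (N ∩ Ici s)) ≤ s
            · rw [hplatR s hsN h1 h2 hpr, hwC _ hvC, hρ's₀]
              linarith
            · push_neg at hpr
              by_cases hpl : s ≤ sSup (N ∩ Iic s) + mmf (sSup (N ∩ Iic s)) (sInf (N ∩ Ici s))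
              · have hub : (3*s - sInf (N ∩ Ici s))/2 ≤ sSup (N ∩ Iic s) := by linarith
                have hud : |sSup (N ∩ Iic s) - s₀| ≤ 4*δ' := by
                  rw [abs_of_nonpos (by linarith)]
                  linarith
                obtain ⟨huC, huclose⟩ := hgood _ hu.1 hud
                rw [hplatL s hsN h1 h2 hpl, hwC _ huC, hρ's₀]
                linarith
              · push_neg at hpl
                have hmmlt : mmf (sSup (N ∩ Iic s)) (sInf (N ∩ Ici s)) < δ' := by linarith
                have hmmeq : mmf (sSup (N ∩ Iic s)) (sInf (N ∩ Ici s)) =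
                    (sInf (N ∩ Ici s) - sSup (N ∩ Iic s))/3 := by
                  rcases min_cases (3*θ) ((sInf (N ∩ Ici s) - sSup (N ∩ Iic s))/3) with ⟨h5, -⟩ | ⟨h5, -⟩
                  · exfalso
                    have h6 : mmf (sSup (N ∩ Iic s)) (sInf (N ∩ Ici s)) = 3*θ := h5
                    linarith
                  · exact h5
                have hvu : sInf (N ∩ Ici s) - sSup (N ∩ Iic s) < 3*δ' := by linarith
                have hud : |sSup (N ∩ Iic s) - s₀| ≤ 4*δ' := by
                  rw [abs_of_nonpos (by linarith)]
                  linarith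
                obtain ⟨huC, huclose⟩ := hgood _ hu.1 hud
                have hdist : dist (w (sSup (N ∩ Iic s))) (w (sInf (N ∩ Ici s))) < δP k := by
                  rw [hwC _ huC, hwC _ hvC]
                  calc dist (ρC (sSup (N ∩ Iic s))) (ρC (sInf (N ∩ Ici s)))
                      ≤ dist (ρC (sSup (N ∩ Iic s))) (ρC s₀) + dist (ρC (sInf (N ∩ Ici s))) (ρC s₀) :=
                        dist_triangle_right _ _ _
                    _ < ε₁ + ε₁ := add_lt_add huclose hvclose
                    _ ≤ δP k := by linarith
                rw [hval s hsN h1 h2]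
                have hsm := hPismall k _ _ (τf (sSup (N ∩ Iic s)) (sInf (N ∩ Ici s)) s)
                  (hwY (sSup (N ∩ Iic s))) (hwY (sInf (N ∩ Ici s))) hdist
                calc dist (Pi (w (sSup (N ∩ Iic s))) (w (sInf (N ∩ Ici s)))
                      (τf (sSup (N ∩ Iic s)) (sInf (N ∩ Ici s)) s)) (ρ' s₀)
                    ≤ dist (Pi (w (sSup (N ∩ Iic s))) (w (sInf (N ∩ Ici s)))
                      (τf (sSup (N ∩ Iic s)) (sInf (N ∩ Ici s)) s)) (w (sSup (N ∩ Iic s)))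
                      + dist (w (sSup (N ∩ Iic s))) (ρ' s₀) := dist_triangle _ _ _
                  _ < ε'/3 + ε'/3 := by
                      refine add_lt_add_of_le_of_lt (le_trans hsm (le_of_lt hk)) ?_
                      rw [hwC _ huC, hρ's₀]
                      linarith
                  _ ≤ ε' := by linarith
          · rw [hvalR s hsN h1 h2, hwC _ hvC, hρ's₀]
            linarith
        · -- s₀ < s
          have h1 : (N ∩ Iic s).Nonempty := ⟨s₀, Or.inl hs₀C, le_of_lt hgt⟩
          have hu := hsupf s h1
          have hule : s₀ ≤ sSup (N ∩ Iic s) := hu.2.2 s₀ (Or.inl hs₀C) (le_of_lt hgt)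
          have hus : sSup (N ∩ Iic s) ≤ s := hu.2.1
          have hud : |sSup (N ∩ Iic s) - s₀| ≤ 4*δ' := by
            rw [abs_of_nonneg (by linarith)]
            linarith
          obtain ⟨huC, huclose⟩ := hgood _ hu.1 hud
          by_cases h2 : (N ∩ Ici s).Nonempty
          · have hv := hinff s h2
            have hvges : s ≤ sInf (N ∩ Ici s) := hv.2.1
            have huslt : sSup (N ∩ Iic s) < s := by
              rcases eq_or_lt_of_le hus with h5 | h5
              · exact absurd (h5 ▸ hu.1) hsN
              · exact h5
            have hsvlt : s < sInf (N ∩ Ici s) := by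
              rcases eq_or_lt_of_le hvges with h5 | h5
              · exact absurd (h5 ▸ hv.1) hsN
              · exact h5
            have huv : sSup (N ∩ Iic s) < sInf (N ∩ Ici s) := lt_trans huslt hsvlt
            obtain ⟨hm1, hm2, hm3⟩ := hmm_facts _ _ huv
            by_cases hpl : s ≤ sSup (N ∩ Iic s) + mmf (sSup (N ∩ Iic s)) (sInf (N ∩ Ici s))
            · rw [hplatL s hsN h1 h2 hpl, hwC _ huC, hρ's₀]
              linarith
            · push_neg at hpl
              by_cases hpr : sInf (N ∩ Ici s) - mmf (sSup (N ∩ Iic s)) (sInf (N ∩ Ici s)) ≤ s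
              · have hvb : sInf (N ∩ Ici s) ≤ (3*s - sSup (N ∩ Iic s))/2 := by linarith
                have hvd : |sInf (N ∩ Ici s) - s₀| ≤ 4*δ' := by
                  rw [abs_of_nonneg (by linarith)]
                  linarith
                obtain ⟨hvC, hvclose⟩ := hgood _ hv.1 hvd
                rw [hplatR s hsN h1 h2 hpr, hwC _ hvC, hρ's₀]
                linarith
              · push_neg at hpr
                have hmmlt : mmf (sSup (N ∩ Iic s)) (sInf (N ∩ Ici s)) < δ' := by linarith
                have hmmeq : mmf (sSup (N ∩ Iic s)) (sInf (N ∩ Ici s)) =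
                    (sInf (N ∩ Ici s) - sSup (N ∩ Iic s))/3 := by
                  rcases min_cases (3*θ) ((sInf (N ∩ Ici s) - sSup (N ∩ Iic s))/3) with ⟨h5, -⟩ | ⟨h5, -⟩
                  · exfalso
                    have h6 : mmf (sSup (N ∩ Iic s)) (sInf (N ∩ Ici s)) = 3*θ := h5
                    linarith
                  · exact h5
                have hvu : sInf (N ∩ Ici s) - sSup (N ∩ Iic s) < 3*δ' := by linarith
                have hvd : |sInf (N ∩ Ici s) - s₀| ≤ 4*δ' := by
                  rw [abs_of_nonneg (by linarith)]
                  linarith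
                obtain ⟨hvC, hvclose⟩ := hgood _ hv.1 hvd
                have hdist : dist (w (sSup (N ∩ Iic s))) (w (sInf (N ∩ Ici s))) < δP k := by
                  rw [hwC _ huC, hwC _ hvC]
                  calc dist (ρC (sSup (N ∩ Iic s))) (ρC (sInf (N ∩ Ici s)))
                      ≤ dist (ρC (sSup (N ∩ Iic s))) (ρC s₀) + dist (ρC (sInf (N ∩ Ici s))) (ρC s₀) :=
                        dist_triangle_right _ _ _
                    _ < ε₁ + ε₁ := add_lt_add huclose hvclose
                    _ ≤ δP k := by linarith
                rw [hval s hsN h1 h2]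
                have hsm := hPismall k _ _ (τf (sSup (N ∩ Iic s)) (sInf (N ∩ Ici s)) s)
                  (hwY (sSup (N ∩ Iic s))) (hwY (sInf (N ∩ Ici s))) hdist
                calc dist (Pi (w (sSup (N ∩ Iic s))) (w (sInf (N ∩ Ici s)))
                      (τf (sSup (N ∩ Iic s)) (sInf (N ∩ Ici s)) s)) (ρ' s₀)
                    ≤ dist (Pi (w (sSup (N ∩ Iic s))) (w (sInf (N ∩ Ici s)))
                      (τf (sSup (N ∩ Iic s)) (sInf (N ∩ Ici s)) s)) (w (sSup (N ∩ Iic s)))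
                      + dist (w (sSup (N ∩ Iic s))) (ρ' s₀) := dist_triangle _ _ _
                  _ < ε'/3 + ε'/3 := by
                      refine add_lt_add_of_le_of_lt (le_trans hsm (le_of_lt hk)) ?_
                      rw [hwC _ huC, hρ's₀]
                      linarith
                  _ ≤ ε' := by linarith
          · rw [hvalL s hsN h1 h2, hwC _ huC, hρ's₀]
            linarith
    · -- Case B: isolated net node
      apply ContinuousAt.continuousWithinAt
      have hs₀P2 : s₀ ∈ P2 := hs₀N.resolve_left hs₀C
      have hN'closed : IsClosed (C ∪ (P2 \ {s₀}) : Set ℝ) :=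
        hCcomp.isClosed.union ((hP2fin.subset diff_subset).isClosed)
      have hs₀N' : s₀ ∉ (C ∪ (P2 \ {s₀}) : Set ℝ) := by
        rintro (h | h)
        · exact hs₀C h
        · exact h.2 rfl
      obtain ⟨r, hr, hballr⟩ := Metric.mem_nhds_iff.1 (hN'closed.isOpen_compl.mem_nhds hs₀N')
      have hiso : ∀ x, |x - s₀| < r → x ∈ N → x = s₀ := by
        intro x hx hxN
        by_contra hne
        have : x ∈ (C ∪ (P2 \ {s₀}) : Set ℝ) := by
          rcases hxN with h | h
          · exact Or.inl h
          · exact Or.inr ⟨h, hne⟩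
        exact hballr (by rwa [mem_ball, Real.dist_eq]) this
      set m₀ : ℝ := min (3*θ) (r/3) with hm₀
      have hm₀pos : 0 < m₀ := lt_min (by linarith) (by linarith)
      set r₃ : ℝ := min r m₀ with hr₃
      have hr₃pos : 0 < r₃ := lt_min hr hm₀pos
      have hconst : ∀ s, |s - s₀| < r₃ → ρ' s = w s₀ := by
        intro s hsr
        have hsr' : |s - s₀| < r := lt_of_lt_of_le hsr (min_le_left _ _)
        have hsm : |s - s₀| < m₀ := lt_of_lt_of_le hsr (min_le_right _ _)
        rcases lt_trichotomy s s₀ with hlt | heq | hgt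
        · -- s < s₀
          have hsN : s ∉ N := by
            intro h
            exact absurd (hiso s hsr' h) (ne_of_lt hlt)
          have h2 : (N ∩ Ici s).Nonempty := ⟨s₀, hs₀N, le_of_lt hlt⟩
          have hveq : sInf (N ∩ Ici s) = s₀ := by
            refine le_antisymm ((hinff s h2).2.2 s₀ hs₀N (le_of_lt hlt)) ?_
            refine le_csInf h2 ?_
            rintro n ⟨hnN, hns⟩
            rw [mem_Ici] at hns
            by_contra hn
            push_neg at hn
            obtain ⟨ha1, ha2⟩ := abs_lt.1 hsr'
            have : |n - s₀| < r := abs_lt.2 ⟨by linarith, by linarith⟩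
            exact absurd (hiso n this hnN) (ne_of_lt hn)
          by_cases h1 : (N ∩ Iic s).Nonempty
          · -- plateau on the right
            have hu := hsupf s h1
            have hufar : sSup (N ∩ Iic s) ≤ s₀ - r := by
              by_contra hc
              push_neg at hc
              obtain ⟨ha1, ha2⟩ := abs_lt.1 hsr'
              have habs : |sSup (N ∩ Iic s) - s₀| < r :=
                abs_lt.2 ⟨by linarith, by linarith [hu.2.1]⟩
              have h5 := hu.2.1
              rw [hiso _ habs hu.1] at h5
              linarith
            have hmmge : m₀ ≤ mmf (sSup (N ∩ Iic s)) s₀ := by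
              show m₀ ≤ min (3*θ) ((s₀ - sSup (N ∩ Iic s))/3)
              refine le_min (min_le_left _ _) ?_
              calc m₀ ≤ r/3 := min_le_right _ _
                _ ≤ (s₀ - sSup (N ∩ Iic s))/3 := by linarith
            have hcond : sInf (N ∩ Ici s) - mmf (sSup (N ∩ Iic s)) (sInf (N ∩ Ici s)) ≤ s := by
              rw [hveq]
              have : s₀ - s < m₀ := by
                rw [abs_lt] at hsm
                linarith [hsm.1]
              linarith
            rw [hplatR s hsN h1 h2 hcond, hveq]
          · rw [hvalR s hsN h1 h2, hveq]
        · rw [heq]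
          exact hvalN s₀ hs₀N
        · -- s₀ < s
          have hsN : s ∉ N := by
            intro h
            exact absurd (hiso s hsr' h) (ne_of_gt hgt)
          have h1 : (N ∩ Iic s).Nonempty := ⟨s₀, hs₀N, le_of_lt hgt⟩
          have hueq : sSup (N ∩ Iic s) = s₀ := by
            refine le_antisymm ?_ ((hsupf s h1).2.2 s₀ hs₀N (le_of_lt hgt))
            refine csSup_le h1 ?_
            rintro n ⟨hnN, hns⟩
            rw [mem_Iic] at hns
            by_contra hn
            push_neg at hn
            obtain ⟨ha1, ha2⟩ := abs_lt.1 hsr'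
            have : |n - s₀| < r := abs_lt.2 ⟨by linarith, by linarith⟩
            exact absurd (hiso n this hnN) (ne_of_gt hn)
          by_cases h2 : (N ∩ Ici s).Nonempty
          · have hv := hinff s h2
            have hvfar : s₀ + r ≤ sInf (N ∩ Ici s) := by
              by_contra hc
              push_neg at hc
              obtain ⟨ha1, ha2⟩ := abs_lt.1 hsr'
              have habs : |sInf (N ∩ Ici s) - s₀| < r :=
                abs_lt.2 ⟨by linarith [hv.2.1], by linarith⟩
              have h5 := hv.2.1
              rw [hiso _ habs hv.1] at h5
              linarith
            have hmmge : m₀ ≤ mmf s₀ (sInf (N ∩ Ici s)) := by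
              show m₀ ≤ min (3*θ) ((sInf (N ∩ Ici s) - s₀)/3)
              refine le_min (min_le_left _ _) ?_
              calc m₀ ≤ r/3 := min_le_right _ _
                _ ≤ (sInf (N ∩ Ici s) - s₀)/3 := by linarith
            have hcond : s ≤ sSup (N ∩ Iic s) + mmf (sSup (N ∩ Iic s)) (sInf (N ∩ Ici s)) := by
              rw [hueq]
              have : s - s₀ < m₀ := by
                rw [abs_lt] at hsm
                linarith [hsm.2]
              linarith
            rw [hplatL s hsN h1 h2 hcond, hueq]
          · rw [hvalL s hsN h1 h2, hueq]
      have heq2 : (fun _ : ℝ => w s₀) =ᶠ[nhds s₀] ρ' := by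
        refine Metric.eventually_nhds_iff.2 ⟨r₃, hr₃pos, fun {s} hs => ?_⟩
        rw [Real.dist_eq] at hs
        exact (hconst s hs).symm
      exact continuousAt_const.congr heq2
  · -- Case A: gap interior
    apply ContinuousAt.continuousWithinAt
    obtain ⟨r, hr, hballr⟩ := Metric.mem_nhds_iff.1 (hNclosed.isOpen_compl.mem_nhds hs₀N)
    have hnotN : ∀ x, |x - s₀| < r → x ∉ N := by
      intro x hx
      exact hballr (by rwa [mem_ball, Real.dist_eq])
    have hfar : ∀ n ∈ N, n ≤ s₀ - r ∨ s₀ + r ≤ n := by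
      intro n hn
      by_contra hc
      push_neg at hc
      exact hnotN n (by rw [abs_lt]; constructor <;> linarith) hn
    have hIic : ∀ s, |s - s₀| < r → N ∩ Iic s = N ∩ Iic s₀ := by
      intro s hs
      rw [abs_lt] at hs
      ext n
      simp only [mem_inter_iff, mem_Iic]
      constructor
      · rintro ⟨hn, hns⟩
        rcases hfar n hn with h | h
        · exact ⟨hn, by linarith⟩
        · exfalso; linarith
      · rintro ⟨hn, hns⟩
        rcases hfar n hn with h | h
        · exact ⟨hn, by linarith⟩
        · exfalso; linarith
    have hIci : ∀ s, |s - s₀| < r → N ∩ Ici s = N ∩ Ici s₀ := by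
      intro s hs
      rw [abs_lt] at hs
      ext n
      simp only [mem_inter_iff, mem_Ici]
      constructor
      · rintro ⟨hn, hns⟩
        rcases hfar n hn with h | h
        · exfalso; linarith
        · exact ⟨hn, by linarith⟩
      · rintro ⟨hn, hns⟩
        rcases hfar n hn with h | h
        · exfalso; linarith
        · exact ⟨hn, by linarith⟩
    by_cases h1 : (N ∩ Iic s₀).Nonempty
    · by_cases h2 : (N ∩ Ici s₀).Nonempty
      · have hcontPi : Continuous fun s : ℝ => Pi (w (sSup (N ∩ Iic s₀))) (w (sInf (N ∩ Ici s₀)))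
            (τf (sSup (N ∩ Iic s₀)) (sInf (N ∩ Ici s₀)) s) := by
          apply (hPicont _ _).comp
          show Continuous fun s : ℝ => (s - sSup (N ∩ Iic s₀) - mmf (sSup (N ∩ Iic s₀)) (sInf (N ∩ Ici s₀))) /
            (sInf (N ∩ Ici s₀) - sSup (N ∩ Iic s₀) - 2 * mmf (sSup (N ∩ Iic s₀)) (sInf (N ∩ Ici s₀)))
          exact ((continuous_id.sub continuous_const).sub continuous_const).div_const _
        have heq2 : (fun s : ℝ => Pi (w (sSup (N ∩ Iic s₀))) (w (sInf (N ∩ Ici s₀)))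
            (τf (sSup (N ∩ Iic s₀)) (sInf (N ∩ Ici s₀)) s)) =ᶠ[nhds s₀] ρ' := by
          refine Metric.eventually_nhds_iff.2 ⟨r, hr, fun {s} hs => ?_⟩
          rw [Real.dist_eq] at hs
          have hsN : s ∉ N := hnotN s hs
          have h1' : (N ∩ Iic s).Nonempty := by rw [hIic s hs]; exact h1
          have h2' : (N ∩ Ici s).Nonempty := by rw [hIci s hs]; exact h2
          rw [hval s hsN h1' h2', hIic s hs, hIci s hs]
        exact hcontPi.continuousAt.congr heq2
      · have heq2 : (fun _ : ℝ => w (sSup (N ∩ Iic s₀))) =ᶠ[nhds s₀] ρ' := by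
          refine Metric.eventually_nhds_iff.2 ⟨r, hr, fun {s} hs => ?_⟩
          rw [Real.dist_eq] at hs
          have hsN : s ∉ N := hnotN s hs
          have h1' : (N ∩ Iic s).Nonempty := by rw [hIic s hs]; exact h1
          have h2' : ¬(N ∩ Ici s).Nonempty := by rw [hIci s hs]; exact h2
          rw [hvalL s hsN h1' h2', hIic s hs]
        exact continuousAt_const.congr heq2
    · by_cases h2 : (N ∩ Ici s₀).Nonempty
      · have heq2 : (fun _ : ℝ => w (sInf (N ∩ Ici s₀))) =ᶠ[nhds s₀] ρ' := by
          refine Metric.eventually_nhds_iff.2 ⟨r, hr, fun {s} hs => ?_⟩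
          rw [Real.dist_eq] at hs
          have hsN : s ∉ N := hnotN s hs
          have h1' : ¬(N ∩ Iic s).Nonempty := by rw [hIic s hs]; exact h1
          have h2' : (N ∩ Ici s).Nonempty := by rw [hIci s hs]; exact h2
          rw [hvalR s hsN h1' h2', hIci s hs]
        exact continuousAt_const.congr heq2
      · have heq2 : (fun _ : ℝ => y₀) =ᶠ[nhds s₀] ρ' := by
          refine Metric.eventually_nhds_iff.2 ⟨r, hr, fun {s} hs => ?_⟩
          rw [Real.dist_eq] at hs
          have hsN : s ∉ N := hnotN s hs
          have h1' : ¬(N ∩ Iic s).Nonempty := by rw [hIic s hs]; exact h1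
          have h2' : ¬(N ∩ Ici s).Nonempty := by rw [hIci s hs]; exact h2
          rw [hvalE s hsN h1' h2']
        exact continuousAt_const.congr heq2


set_option maxHeartbeats 1600000 in
lemma extend_on_S
    (hYne : Y.Nonempty)
    (proj : X → X) (hprojY : ∀ x, proj x ∈ Y) (hprojd : ∀ x, dist x (proj x) = infDist x Y)
    (Pi : X → X → ℝ → X) (δP : ℕ → ℝ) (hδPpos : ∀ k, 0 < δP k)
    (hPicont : ∀ w w', Continuous (Pi w w'))
    (hPiY : ∀ w w' t, w ∈ Y → w' ∈ Y → Pi w w' t ∈ Y)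
    (hPi0 : ∀ w w' t, w ∈ Y → w' ∈ Y → t ≤ 0 → Pi w w' t = w)
    (hPi1 : ∀ w w' t, w ∈ Y → w' ∈ Y → 1 ≤ t → Pi w w' t = w')
    (hPismall : ∀ k w w' t, w ∈ Y → w' ∈ Y → dist w w' < δP k →
      dist (Pi w w' t) w ≤ (1/2:ℝ)^k)
    {S : Set ℝ} {fS : ℝ → X} {D : ℝ}
    (hfcont : ContinuousOn fS S)
    (hgpos : ∀ s ∈ S, 0 < infDist (fS s) Y)
    (hgbdd : ∀ s ∈ S, infDist (fS s) Y ≤ D)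
    (hK : ∀ c : ℝ, 0 < c → IsCompact {s | s ∈ S ∧ c ≤ infDist (fS s) Y}) :
    ∃ ρ : ℝ → X, (∀ s, ρ s ∈ Y) ∧ ContinuousOn ρ S ∧
      ∀ ε > 0, ∃ c > 0, ∀ s ∈ S, infDist (fS s) Y ≤ c → dist (ρ s) (fS s) ≤ ε := by
  classical
  obtain ⟨y₀, hy₀⟩ := hYne
  -- threshold sequence
  set b : ℕ → ℝ := fun n =>
    Nat.rec (min (δP 4 / 16) 1) (fun m ih => min (δP (m+5)/16) (ih/2)) n with hb
  have hbsucc : ∀ n, b (n+1) = min (δP (n+5)/16) (b n / 2) := fun n => rfl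
  have hb0 : b 0 = min (δP 4 / 16) 1 := rfl
  have hbpos : ∀ n, 0 < b n := by
    intro n; induction n with
    | zero => rw [hb0]; exact lt_min (by linarith [hδPpos 4]) one_pos
    | succ n ih => rw [hbsucc]; exact lt_min (by linarith [hδPpos (n+5)]) (by linarith)
  have hbhalf : ∀ n, b (n+1) ≤ b n / 2 := fun n => by rw [hbsucc]; exact min_le_right _ _
  have hbδ : ∀ n, b n ≤ δP (n+4)/16 := by
    intro n; cases n with
    | zero => rw [hb0]; exact min_le_left _ _
    | succ n => rw [hbsucc]; exact min_le_left _ _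
  have hbone : ∀ n, b n ≤ (1/2:ℝ)^n := by
    intro n; induction n with
    | zero => rw [hb0, pow_zero]; exact min_le_right _ _
    | succ n ih =>
        calc b (n+1) ≤ b n / 2 := hbhalf n
          _ ≤ (1/2:ℝ)^n / 2 := by linarith
          _ = (1/2:ℝ)^(n+1) := by rw [pow_succ]; ring
  have hbstrict : ∀ n, b (n+1) < b n := fun n =>
    lt_of_le_of_lt (hbhalf n) (by linarith [hbpos n])
  have hbanti : Antitone b := antitone_nat_of_succ_le (fun n => le_of_lt (hbstrict n))
  set e : ℕ → ℝ := fun n => (b n - b (n+1))/16 with he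
  have hepos : ∀ n, 0 < e n := by
    intro n; rw [he]
    have := hbstrict n
    simp only
    linarith
  have heb : ∀ n, e n ≤ b n / 16 := by
    intro n; rw [he]
    have := hbpos (n+1)
    simp only
    linarith
  have heone : ∀ n, e n ≤ (1/2:ℝ)^n := by
    intro n
    have h1 := heb n
    have h2 := hbone n
    have h3 := hbpos n
    nlinarith
  -- the compact filtration
  set B : ℕ → Set ℝ := fun n => {s | s ∈ S ∧ b n ≤ infDist (fS s) Y} with hB
  have hBcomp : ∀ n, IsCompact (B n) := fun n => hK (b n) (hbpos n)
  have hBsub : ∀ n, B n ⊆ S := fun n s hs => hs.1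
  have hBmono : ∀ n, B n ⊆ B (n+1) := fun n s hs =>
    ⟨hs.1, le_trans (le_of_lt (hbstrict n)) hs.2⟩
  have hBm : Monotone B := monotone_nat_of_le_succ (fun n => hBmono n)
  -- qq sequence
  set qq : ℕ → ℝ := fun n => Nat.casesOn n (b 0 + 6 * e 0 + (1/2:ℝ)^4)
      (fun m => b (m+1) + 4 * e (m+1) + 2 * e m + (1/2:ℝ)^(m+4)) with hqq
  have hqq0 : qq 0 = b 0 + 6 * e 0 + (1/2:ℝ)^4 := rfl
  have hqqsucc : ∀ m, qq (m+1) = b (m+1) + 4 * e (m+1) + 2 * e m + (1/2:ℝ)^(m+4) := fun m => rfl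
  have hqqpos : ∀ n, 0 ≤ qq n := by
    intro n; cases n with
    | zero => rw [hqq0]; have := hbpos 0; have := hepos 0; positivity
    | succ m =>
        rw [hqqsucc]
        have := hbpos (m+1); have := hepos (m+1); have := hepos m
        positivity
  have hqqdec : ∀ n, qq n ≤ 16 * (1/2:ℝ)^n := by
    intro n; cases n with
    | zero =>
        rw [hqq0, pow_zero]
        have h1 := hbone 0
        have h2 := heone 0
        norm_num at h1 h2 ⊢
        linarith
    | succ m =>
        rw [hqqsucc]
        have h1 := hbone (m+1)
        have h2 := heone (m+1)
        have h3 := heone m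
        have h4 : (1/2:ℝ)^(m+4) ≤ (1/2:ℝ)^(m+1) :=
          pow_le_pow_of_le_one (by norm_num) (by norm_num) (by omega)
        have h5 : (1/2:ℝ)^(m+1) = (1/2:ℝ)^m / 2 := by rw [pow_succ]; ring
        nlinarith [pow_pos (show (0:ℝ) < 1/2 by norm_num) m]
  -- per-stage tolerance for uniform continuity
  set et : ℕ → ℝ := fun n => Nat.casesOn n (e 0) e with het
  have hetpos : ∀ n, 0 < et n := by
    intro n; cases n with
    | zero => exact hepos 0
    | succ m => exact hepos m
  have hθex : ∀ n : ℕ, ∃ θ : ℝ, 0 < θ ∧ ∀ s ∈ B n, ∀ s' ∈ B n, |s - s'| ≤ 9*θ →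
      dist (fS s) (fS s') ≤ et n := by
    intro n
    have huc := (hBcomp n).uniformContinuousOn_of_continuous (hfcont.mono (hBsub n))
    rw [Metric.uniformContinuousOn_iff] at huc
    obtain ⟨δ, hδ, hP⟩ := huc (et n) (hetpos n)
    refine ⟨δ/10, by linarith, fun s hs s' hs' hss => ?_⟩
    exact le_of_lt (hP s hs s' hs' (by rw [Real.dist_eq]; linarith))
  choose θs hθpos hθunif using hθex
  have hProps : True := trivial
  -- stage properties
  set Props : ℕ → (ℝ → X) → Prop := fun n f =>
    ContinuousOn f (B n) ∧ (∀ s, f s ∈ Y) ∧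
      ∀ s ∈ B n, infDist (fS s) Y ≤ b n + 4 * e n → dist (f s) (fS s) ≤ qq n with hPropsdef
  set Rel : ℕ → (ℝ → X) → (ℝ → X) → Prop := fun n f f' =>
    (∀ s ∈ B n, f' s = f s) ∧
      ∀ s ∈ B (n+1), s ∉ B n → ∀ k : ℕ, 2 * max (qq n) (b n + e n) + 2 * e n < δP k →
        dist (f' s) (fS s) ≤ (1/2:ℝ)^k + max (qq n) (b n + e n) + e n with hReldef
  -- base stage
  have hbase : ∃ f, Props 0 f := by
    obtain ⟨f, hf1, hf2, hf3, hf4, hf5⟩ := step_extend (Y := Y) ⟨y₀, hy₀⟩ proj hprojY hprojd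
      Pi δP hδPpos hPicont hPiY hPi0 hPi1 hPismall
      (C := ∅) (C' := B 0) (fS := fS) (a := |D| + 1 + 4 * e 0) (θ := θs 0) (e := e 0) (q := 0)
      (empty_subset _) isCompact_empty (hBcomp 0) (hfcont.mono (hBsub 0))
      (hθpos 0) (hepos 0) le_rfl (by linarith [hepos 0, abs_nonneg D])
      (fun s hs s' hs' hss => hθunif 0 s hs s' hs' hss)
      (fun s hs => absurd hs (notMem_empty s))
      (by
        intro s hs habs
        exfalso
        have h1 := hgbdd s (hBsub 0 hs)
        have h2 := le_abs_self D
        have h3 := hepos 0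
        linarith)
      (ρC := fun _ => y₀) (continuousOn_empty _)
      (fun s hs => absurd hs (notMem_empty s))
      (fun s hs => absurd hs (notMem_empty s))
    refine ⟨f, hf2, hf3, ?_⟩
    intro s hs hgs
    have hd1 := hgbdd s (hBsub 0 hs)
    have hd2 := le_abs_self D
    have hd3 := heb 0
    have hd4 := hbpos 0
    have hd5 := hbδ 0
    have hd6 := hδPpos 4
    have hd7 := hepos 0
    have h0 := hf5 s hs (notMem_empty s) 4 (by linarith) (by linarith)
    calc dist (f s) (fS s) ≤ infDist (fS s) Y + 2*(e 0) + (1/2:ℝ)^4 := h0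
      _ ≤ qq 0 := by rw [hqq0]; linarith
  -- step
  have hstepEx : ∀ (n : ℕ) (f : ℝ → X), ∃ f', Props n f → (Props (n+1) f' ∧ Rel n f f') := by
    intro n f
    by_cases hf : Props n f
    · obtain ⟨hf1, hf2, hf3⟩ := hf
      obtain ⟨f', hO1, hO2, hO3, hO4, hO5⟩ := step_extend (Y := Y) ⟨y₀, hy₀⟩ proj hprojY hprojd
        Pi δP hδPpos hPicont hPiY hPi0 hPi1 hPismall
        (C := B n) (C' := B (n+1)) (fS := fS) (a := b n) (θ := θs (n+1)) (e := e n) (q := qq n)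
        (hBmono n) (hBcomp n) (hBcomp (n+1)) (hfcont.mono (hBsub (n+1)))
        (hθpos (n+1)) (hepos n) (hqqpos n) (hbpos n)
        (fun s hs s' hs' hss => hθunif (n+1) s hs s' hs' hss)
        (fun s hs => hs.2)
        (fun s hs hbs => ⟨hs.1, hbs⟩)
        (ρC := f) hf1 (fun s _ => hf2 s) hf3
      refine ⟨f', fun _ => ⟨⟨hO2, hO3, ?_⟩, hO1, hO4⟩⟩
      intro s hs hgs
      have h2 := heb n
      have h3 := heb (n+1)
      have h4 := hbhalf n
      have h5 := hbpos n
      have h6 := hbpos (n+1)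
      have h7 := hepos n
      have h8 := hepos (n+1)
      by_cases hsB : s ∈ B n
      · exfalso
        have h9 : b n ≤ infDist (fS s) Y := hsB.2
        linarith
      · have h10 := hbδ n
        have h11 := hδPpos (n+4)
        have h0 := hO5 s hs hsB (n+4) (by linarith) (by linarith)
        rw [hqqsucc n]
        linarith
    · exact ⟨f, fun h => absurd h hf⟩
  choose F0 hF0 using hbase
  choose stepF stepSpec using hstepEx
  set Stg : ℕ → ℝ → X := fun n => Nat.rec F0 stepF n with hStg
  have hInv : ∀ n, Props n (Stg n) := by
    intro n; induction n with
    | zero => exact hF0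
    | succ n ih => exact (stepSpec n (Stg n) ih).1
  have hRelall : ∀ n, Rel n (Stg n) (Stg (n+1)) := fun n => (stepSpec n (Stg n) (hInv n)).2
  have hfreeze : ∀ m n, n ≤ m → ∀ s ∈ B n, Stg m s = Stg n s := by
    intro m
    induction m with
    | zero =>
        intro n hn s hs
        have h0 : n = 0 := Nat.le_zero.1 hn
        subst h0; rfl
    | succ m ih =>
        intro n hn s hs
        rcases eq_or_lt_of_le hn with h | h
        · subst h; rfl
        · have hnm : n ≤ m := by omega
          have h1 : s ∈ B m := hBm hnm hs
          have h2 : Stg (m+1) s = Stg m s := (hRelall m).1 s h1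
          rw [h2, ih n hnm s hs]
  set ρF : ℝ → X := fun s => if h : ∃ n, s ∈ B n then Stg (Nat.find h) s else y₀ with hρF
  have hexist : ∀ s ∈ S, ∃ n, s ∈ B n := by
    intro s hs
    have h1 := hgpos s hs
    obtain ⟨n, hn⟩ := exists_pow_lt_of_lt_one h1 (by norm_num : (1/2:ℝ) < 1)
    exact ⟨n, hs, le_of_lt (lt_of_le_of_lt (hbone n) hn)⟩
  have hagree : ∀ n, ∀ s ∈ B n, ρF s = Stg n s := by
    intro n s hs
    have hex : ∃ m, s ∈ B m := ⟨n, hs⟩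
    simp only [hρF, dif_pos hex]
    exact (hfreeze n (Nat.find hex) (Nat.find_le hs) s (Nat.find_spec hex)).symm
  refine ⟨ρF, ?_, ?_, ?_⟩
  · intro s
    simp only [hρF]
    split_ifs with h
    · exact (hInv _).2.1 s
    · exact hy₀
  · intro s₀ hs₀
    obtain ⟨n, hn⟩ : ∃ n, b (n+1) < infDist (fS s₀) Y := by
      obtain ⟨m, hm⟩ := exists_pow_lt_of_lt_one (hgpos s₀ hs₀) (by norm_num : (1/2:ℝ) < 1)
      refine ⟨m, lt_of_le_of_lt ?_ hm⟩
      exact le_trans (hbone (m+1)) (pow_le_pow_of_le_one (by norm_num) (by norm_num) (by omega))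
    have hgc : ContinuousWithinAt (fun s => infDist (fS s) Y) S s₀ :=
      ContinuousAt.comp_continuousWithinAt (g := fun x => infDist x Y)
        (continuous_infDist_pt Y).continuousAt (hfcont s₀ hs₀)
    rw [Metric.continuousWithinAt_iff] at hgc
    obtain ⟨r, hr, hrP⟩ := hgc (infDist (fS s₀) Y - b (n+1)) (by linarith)
    have hWB : S ∩ ball s₀ r ⊆ B (n+1) := by
      intro s hs
      have h5 := hrP hs.1 (mem_ball.1 hs.2)
      rw [Real.dist_eq] at h5
      refine ⟨hs.1, ?_⟩
      have h6 := (abs_lt.1 h5).1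
      linarith
    have hmem : s₀ ∈ S ∩ ball s₀ r := ⟨hs₀, mem_ball_self hr⟩
    have hc1 : ContinuousWithinAt (Stg (n+1)) (S ∩ ball s₀ r) s₀ :=
      ((hInv (n+1)).1 s₀ (hWB hmem)).mono hWB
    have hc2 : ContinuousWithinAt ρF (S ∩ ball s₀ r) s₀ :=
      hc1.congr (fun s hs => hagree (n+1) s (hWB hs)) (hagree (n+1) s₀ (hWB hmem))
    exact hc2.mono_of_mem_nhdsWithin (inter_mem_nhdsWithin S (ball_mem_nhds s₀ hr))
  · intro ε hε
    obtain ⟨k, hk⟩ : ∃ k, (1/2:ℝ)^k < ε/2 :=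
      exists_pow_lt_of_lt_one (by linarith) (by norm_num)
    obtain ⟨M1, hM1⟩ : ∃ M, (1/2:ℝ)^M < δP k / 34 :=
      exists_pow_lt_of_lt_one (by linarith [hδPpos k]) (by norm_num)
    obtain ⟨M2, hM2⟩ : ∃ M, (1/2:ℝ)^M < ε/34 :=
      exists_pow_lt_of_lt_one (by linarith) (by norm_num)
    refine ⟨b (max M1 M2 + 1), hbpos (max M1 M2 + 1), ?_⟩
    intro s hs hgs
    have hex := hexist s hs
    have hsm : s ∈ B (Nat.find hex) := Nat.find_spec hex
    have hmge : max M1 M2 + 1 ≤ Nat.find hex := by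
      by_contra hcon
      push_neg at hcon
      have h7 := hbanti (show Nat.find hex ≤ max M1 M2 by omega)
      have h8 := hbstrict (max M1 M2)
      have h9 : b (Nat.find hex) ≤ infDist (fS s) Y := hsm.2
      linarith
    obtain ⟨mm, hmmeq⟩ : ∃ mm, Nat.find hex = mm + 1 := ⟨Nat.find hex - 1, by omega⟩
    have hmmge : max M1 M2 ≤ mm := by omega
    rw [hmmeq] at hsm
    have hnot : s ∉ B mm := by
      have := Nat.find_min hex (show mm < Nat.find hex by omega)
      exact this
    have hp0 : (0:ℝ) < (1/2:ℝ)^mm := by positivity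
    have hmax : max (qq mm) (b mm + e mm) ≤ 16 * (1/2:ℝ)^mm := by
      refine max_le (hqqdec mm) ?_
      have h1 := hbone mm
      have h2 := heone mm
      linarith
    have hpM1 : (1/2:ℝ)^mm ≤ (1/2:ℝ)^M1 :=
      pow_le_pow_of_le_one (by norm_num) (by norm_num) (le_trans (le_max_left _ _) hmmge)
    have hpM2 : (1/2:ℝ)^mm ≤ (1/2:ℝ)^M2 :=
      pow_le_pow_of_le_one (by norm_num) (by norm_num) (le_trans (le_max_right _ _) hmmge)
    have he1 := heone mm
    have hcond : 2 * max (qq mm) (b mm + e mm) + 2 * e mm < δP k := by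
      have : 2 * max (qq mm) (b mm + e mm) + 2 * e mm ≤ 34 * (1/2:ℝ)^mm := by linarith
      calc 2 * max (qq mm) (b mm + e mm) + 2 * e mm ≤ 34 * (1/2:ℝ)^mm := this
        _ ≤ 34 * (1/2:ℝ)^M1 := by linarith
        _ < δP k := by linarith
    have hbound := (hRelall mm).2 s hsm hnot k hcond
    have hagr : ρF s = Stg (mm+1) s := hagree (mm+1) s hsm
    rw [hagr]
    calc dist (Stg (mm+1) s) (fS s)
        ≤ (1/2:ℝ)^k + max (qq mm) (b mm + e mm) + e mm := hbound
      _ ≤ ε/2 + 16*(1/2:ℝ)^mm + (1/2:ℝ)^mm := by linarith [le_of_lt hk]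
      _ ≤ ε/2 + 17*(1/2:ℝ)^M2 := by linarith
      _ ≤ ε/2 + 17*(ε/34) := by linarith
      _ = ε := by ring



open Set Topology Metric Filter in
theorem stmt11_aux {X : Type*} [TopologicalSpace X] [CompactSpace X]
    [TopologicalSpace.MetrizableSpace X] (Y : Set X)
    (hYc : IsCompact Y) (hYconn : IsConnected Y) (hYlc : LocallyConnectedSpace ↥Y)
    (hcompl : ∃ S : Set ℝ, Nonempty (↥(Yᶜ) ≃ₜ ↥S)) :
    ∃ r : X → X, Continuous r ∧ (∀ x, r x ∈ Y) ∧ ∀ y ∈ Y, r y = y := by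
  classical
  letI : MetricSpace X := TopologicalSpace.metrizableSpaceMetric X
  obtain ⟨S, ⟨hom⟩⟩ := hcompl
  have hYne : Y.Nonempty := hYconn.nonempty
  obtain ⟨y₀, hy₀⟩ := hYne
  have hYclosed : IsClosed Y := hYc.isClosed
  haveI : CompactSpace ↥Y := isCompact_iff_compactSpace.1 hYc
  haveI : ConnectedSpace ↥Y := isConnected_iff_connectedSpace.1 hYconn
  haveI := hYlc
  obtain ⟨PiE, δP, hδP0, hδPle, hδPmono, hcontE, h0E, h1E, hsmallE⟩ :=
    Stmt11.exists_path_data (E := ↥Y)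
  set PiX : X → X → ℝ → X := fun w w' t =>
    if h : w ∈ Y ∧ w' ∈ Y then ((PiE ⟨w, h.1⟩ ⟨w', h.2⟩ t : ↥Y) : X) else w with hPiX
  have hPicont : ∀ w w', Continuous (PiX w w') := by
    intro w w'
    by_cases h : w ∈ Y ∧ w' ∈ Y
    · have heq : PiX w w' = fun t => ((PiE ⟨w, h.1⟩ ⟨w', h.2⟩ t : ↥Y) : X) := by
        funext t; simp only [hPiX, dif_pos h]
      rw [heq]
      exact continuous_subtype_val.comp (hcontE _ _)
    · have heq : PiX w w' = fun _ => w := by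
        funext t; simp only [hPiX, dif_neg h]
      rw [heq]; exact continuous_const
  have hPiY : ∀ w w' t, w ∈ Y → w' ∈ Y → PiX w w' t ∈ Y := by
    intro w w' t hw hw'
    simp only [hPiX, dif_pos (And.intro hw hw')]
    exact (PiE ⟨w, hw⟩ ⟨w', hw'⟩ t).2
  have hPi0 : ∀ w w' t, w ∈ Y → w' ∈ Y → t ≤ 0 → PiX w w' t = w := by
    intro w w' t hw hw' ht
    simp only [hPiX, dif_pos (And.intro hw hw')]
    rw [h0E ⟨w, hw⟩ ⟨w', hw'⟩ t ht]
  have hPi1 : ∀ w w' t, w ∈ Y → w' ∈ Y → 1 ≤ t → PiX w w' t = w' := by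
    intro w w' t hw hw' ht
    simp only [hPiX, dif_pos (And.intro hw hw')]
    rw [h1E ⟨w, hw⟩ ⟨w', hw'⟩ t ht]
  have hPismall : ∀ (k : ℕ) (w w' : X) (t : ℝ), w ∈ Y → w' ∈ Y → dist w w' < δP k →
      dist (PiX w w' t) w ≤ (1/2:ℝ)^k := by
    intro k w w' t hw hw' hd
    simp only [hPiX, dif_pos (And.intro hw hw')]
    have h5 := hsmallE k ⟨w, hw⟩ ⟨w', hw'⟩ t (by rw [Subtype.dist_eq]; exact hd)
    rwa [Subtype.dist_eq] at h5
  have hproj : ∀ x : X, ∃ y, y ∈ Y ∧ dist x y = infDist x Y := by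
    intro x
    obtain ⟨y, hy, hd⟩ := hYc.exists_infDist_eq_dist ⟨y₀, hy₀⟩ x
    exact ⟨y, hy, hd.symm⟩
  choose proj hprojY hprojd using hproj
  set fS : ℝ → X := fun s => if hs : s ∈ S then ((hom.symm ⟨s, hs⟩ : ↥(Yᶜ)) : X) else y₀ with hfS
  have hfSval : ∀ s (hs : s ∈ S), fS s = ((hom.symm ⟨s, hs⟩ : ↥(Yᶜ)) : X) := by
    intro s hs; simp only [hfS, dif_pos hs]
  have hfScont : ContinuousOn fS S := by
    rw [continuousOn_iff_continuous_restrict]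
    have heq : S.domRestrict fS = fun p : ↥S => ((hom.symm p : ↥(Yᶜ)) : X) := by
      funext p
      simp only [domRestrict_apply, hfS, dif_pos p.2]
    rw [heq]
    exact continuous_subtype_val.comp hom.symm.continuous
  have hfSmem : ∀ s ∈ S, fS s ∈ Yᶜ := by
    intro s hs; rw [hfSval s hs]; exact (hom.symm ⟨s, hs⟩).2
  have hgpos : ∀ s ∈ S, 0 < infDist (fS s) Y :=
    fun s hs => (hYclosed.notMem_iff_infDist_pos ⟨y₀, hy₀⟩).1 (hfSmem s hs)
  have hgbdd : ∀ s ∈ S, infDist (fS s) Y ≤ diam (univ : Set X) := by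
    intro s _
    exact le_trans (infDist_le_dist_of_mem hy₀)
      (dist_le_diam_of_mem isCompact_univ.isBounded (mem_univ _) (mem_univ _))
  have hK : ∀ c : ℝ, 0 < c → IsCompact {s | s ∈ S ∧ c ≤ infDist (fS s) Y} := by
    intro c hc
    set K : Set X := {x | c ≤ infDist x Y} with hKdef
    have hKclosed : IsClosed K := isClosed_le continuous_const (continuous_infDist_pt Y)
    have hKcomp : IsCompact K := hKclosed.isCompact
    have hKY : K ⊆ Yᶜ := by
      intro x hx hxY
      have h1 := infDist_zero_of_mem hxY
      have h2 : c ≤ infDist x Y := hx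
      rw [h1] at h2
      linarith
    have hpre : IsCompact (Subtype.val ⁻¹' K : Set ↥(Yᶜ)) := by
      rw [Subtype.isCompact_iff]
      have himg2 : Subtype.val '' (Subtype.val ⁻¹' K : Set ↥(Yᶜ)) = K := by
        ext x
        constructor
        · rintro ⟨p, hp, rfl⟩; exact hp
        · intro hx; exact ⟨⟨x, hKY hx⟩, hx, rfl⟩
      rw [himg2]; exact hKcomp
    have himg : {s | s ∈ S ∧ c ≤ infDist (fS s) Y} =
        Subtype.val '' (hom '' (Subtype.val ⁻¹' K)) := by
      ext s
      constructor
      · rintro ⟨hs, hcs⟩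
        refine ⟨hom (hom.symm ⟨s, hs⟩), ⟨hom.symm ⟨s, hs⟩, ?_, rfl⟩, ?_⟩
        · show ((hom.symm ⟨s, hs⟩ : ↥(Yᶜ)) : X) ∈ K
          rw [← hfSval s hs]; exact hcs
        · rw [Homeomorph.apply_symm_apply]
      · rintro ⟨p, ⟨x, hxK, rfl⟩, rfl⟩
        have hs : ((hom x : ↥S) : ℝ) ∈ S := (hom x).2
        refine ⟨hs, ?_⟩
        have h5 : fS ((hom x : ↥S) : ℝ) = (x : X) := by
          rw [hfSval _ hs]
          congr 1
          rw [show (⟨((hom x : ↥S) : ℝ), hs⟩ : ↥S) = hom x from Subtype.ext rfl,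
            Homeomorph.symm_apply_apply]
        rw [h5]; exact hxK
    rw [himg]
    exact ((hpre.image hom.continuous).image continuous_subtype_val)
  obtain ⟨ρ, hρY, hρcont, hρsh⟩ := Stmt11.extend_on_S (X := X) (Y := Y) ⟨y₀, hy₀⟩
    proj hprojY hprojd PiX δP hδP0 hPicont hPiY hPi0 hPi1 hPismall
    hfScont hgpos hgbdd hK
  set emb : X → ℝ := fun x => if hx : x ∈ Yᶜ then ((hom ⟨x, hx⟩ : ↥S) : ℝ) else 0 with hemb
  have hembval : ∀ x (hx : x ∈ Yᶜ), emb x = ((hom ⟨x, hx⟩ : ↥S) : ℝ) := by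
    intro x hx; simp only [hemb, dif_pos hx]
  have hembS : ∀ x (hx : x ∈ Yᶜ), emb x ∈ S := by
    intro x hx; rw [hembval x hx]; exact (hom ⟨x, hx⟩).2
  have hembf : ∀ x (hx : x ∈ Yᶜ), fS (emb x) = x := by
    intro x hx
    have hs : emb x ∈ S := hembS x hx
    rw [hfSval _ hs]
    have h5 : (⟨emb x, hs⟩ : ↥S) = hom ⟨x, hx⟩ := Subtype.ext (hembval x hx)
    rw [h5, Homeomorph.symm_apply_apply]
  set r : X → X := fun x => if x ∈ Y then x else ρ (emb x) with hrdef
  have hrY : ∀ x, r x ∈ Y := by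
    intro x
    simp only [hrdef]
    split_ifs with h
    · exact h
    · exact hρY _
  have hrid : ∀ y ∈ Y, r y = y := by
    intro y hy; simp only [hrdef, if_pos hy]
  refine ⟨r, ?_, hrY, hrid⟩
  rw [continuous_iff_continuousAt]
  intro x₀
  by_cases hx₀ : x₀ ∈ Y
  · rw [Metric.continuousAt_iff]
    intro ε hε
    obtain ⟨c, hc, hcP⟩ := hρsh (ε/3) (by linarith)
    refine ⟨min (ε/3) c, lt_min (by linarith) hc, ?_⟩
    intro x hx
    rw [hrid x₀ hx₀]
    by_cases hxY : x ∈ Y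
    · rw [hrdef]; simp only [if_pos hxY]
      calc dist x x₀ < min (ε/3) c := hx
        _ ≤ ε := le_trans (min_le_left _ _) (by linarith)
    · have hx' : x ∈ Yᶜ := hxY
      have h1 : infDist x Y ≤ dist x x₀ := infDist_le_dist_of_mem hx₀
      have h2 : infDist (fS (emb x)) Y ≤ c := by
        rw [hembf x hx']
        exact le_trans h1 (le_trans (le_of_lt hx) (min_le_right _ _))
      have h3 := hcP (emb x) (hembS x hx') h2
      rw [hembf x hx'] at h3
      have hval : r x = ρ (emb x) := by simp only [hrdef, if_neg hxY]
      rw [hval]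
      calc dist (ρ (emb x)) x₀ ≤ dist (ρ (emb x)) x + dist x x₀ := dist_triangle _ _ _
        _ ≤ ε/3 + min (ε/3) c := add_le_add h3 (le_of_lt hx)
        _ < ε := by
            have h6 := min_le_left (ε/3) c
            linarith
  · have hopen : IsOpen (Yᶜ) := hYclosed.isOpen_compl
    have hembcont : ContinuousOn emb Yᶜ := by
      rw [continuousOn_iff_continuous_restrict]
      have heq : (Yᶜ).domRestrict emb = fun p : ↥(Yᶜ) => ((hom p : ↥S) : ℝ) := by
        funext p
        simp only [domRestrict_apply, hemb, dif_pos p.2]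
      rw [heq]
      exact continuous_subtype_val.comp hom.continuous
    have hco : ContinuousOn (fun x => ρ (emb x)) Yᶜ :=
      ContinuousOn.comp hρcont hembcont (fun x hx => hembS x hx)
    have hca : ContinuousAt (fun x => ρ (emb x)) x₀ :=
      hco.continuousAt (hopen.mem_nhds hx₀)
    refine hca.congr ?_
    refine Filter.eventuallyEq_of_mem (hopen.mem_nhds hx₀) ?_
    intro x hx
    show ρ (emb x) = r x
    simp only [hrdef, if_neg (show ¬ x ∈ Y from hx)]

end Stmt11


/-- If `X` is compact metrizable, `Y ⊆ X` is a locally connected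
subcontinuum, and `X \ Y` is homeomorphic to a subspace of `ℝ`, then `Y` is a retract
of `X`. -/
theorem stmt11 {X : Type*} [TopologicalSpace X] [CompactSpace X]
    [TopologicalSpace.MetrizableSpace X] (Y : Set X)
    (hYc : IsCompact Y) (hYconn : IsConnected Y) (hYlc : LocallyConnectedSpace ↥Y)
    (hcompl : ∃ S : Set ℝ, Nonempty (↥(Yᶜ) ≃ₜ ↥S)) :
    ∃ r : X → X, Continuous r ∧ (∀ x, r x ∈ Y) ∧ ∀ y ∈ Y, r y = y := by
  exact Stmt11.stmt11_aux Y hYc hYconn hYlc hcompl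
end

section
/- Let X be a metrizable space and let Y ⊆ X be a retract of X. Then 𝓜(Y) = {M ⊆ Y : M ∈ 𝓜(X)}; that is, a compact set M ⊆ Y belongs to 𝓜(Y) (with Y carrying the subspace topology) if and only if M belongs to 𝓜(X). -/
open Set Topology

/-- If `Y` is a retract of the metrizable space `X`, then
`𝓜(Y) = {M ⊆ Y : M ∈ 𝓜(X)}`. -/
theorem stmt12 {X : Type*} [TopologicalSpace X] [TopologicalSpace.MetrizableSpace X]
    (Y : Set X) (r : X → X) (hr : Continuous r) (hrY : ∀ x, r x ∈ Y)
    (hrid : ∀ y ∈ Y, r y = y) :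
    MSetIn Y = {M : Set X | M ⊆ Y ∧ M ∈ MSpace X} := by

  have hT2 : T2Space X := inferInstance
  ext M
  constructor
  · rintro ⟨M', ⟨hMc, f, hf, hne, hfM, hmin⟩, rfl⟩
    have hsubY : Subtype.val '' M' ⊆ Y := by
      rintro x ⟨y, _, rfl⟩; exact y.2
    refine ⟨hsubY, hMc.image continuous_subtype_val, fun x => ↑(f ⟨r x, hrY x⟩),
      continuous_subtype_val.comp (hf.comp ((hr.subtype_mk hrY))), ?_, ?_, ?_⟩
    · exact hne.image _
    · have key : ∀ y : Y, (↑(f ⟨r ↑y, hrY ↑y⟩) : X) = ↑(f y) := fun y =>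
        congrArg (fun z => (↑(f z) : X)) (Subtype.ext (hrid _ y.2))
      calc (fun x => (↑(f ⟨r x, hrY x⟩) : X)) '' (Subtype.val '' M')
          = (fun y : Y => (↑(f y) : X)) '' M' := by
            rw [Set.image_image]
            exact Set.image_congr (fun y _ => key y)
        _ = Subtype.val '' (f '' M') := by rw [Set.image_image]
        _ = Subtype.val '' M' := by rw [hfM]
    · intro N hNM hNne hNcl hNinv
      have key : ∀ y : Y, (↑(f ⟨r ↑y, hrY ↑y⟩) : X) = ↑(f y) := fun y =>
        congrArg (fun z => (↑(f z) : X)) (Subtype.ext (hrid _ y.2))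
      have hNY : N ⊆ Y := hNM.trans hsubY
      have h1 : Subtype.val '' (Subtype.val ⁻¹' N : Set Y) = N :=
        Set.image_preimage_eq_of_subset (by rw [Subtype.range_coe]; exact hNY)
      have hN'M : (Subtype.val ⁻¹' N : Set Y) ⊆ M' := by
        intro y hy
        obtain ⟨z, hz, hzy⟩ := hNM hy
        rwa [← Subtype.val_injective hzy]
      have hN'ne : (Subtype.val ⁻¹' N : Set Y).Nonempty := by
        obtain ⟨x, hx⟩ := hNne
        exact ⟨⟨x, hNY hx⟩, hx⟩
      have hN'cl : IsClosed (Subtype.val ⁻¹' N : Set Y) :=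
        hNcl.preimage continuous_subtype_val
      have hN'inv : f '' (Subtype.val ⁻¹' N) ⊆ Subtype.val ⁻¹' N := by
        rintro _ ⟨y, hy, rfl⟩
        have h2 : (fun x => (↑(f ⟨r x, hrY x⟩) : X)) ↑y ∈ N :=
          hNinv ⟨↑y, hy, rfl⟩
        simpa only [Set.mem_preimage, key y] using h2
      rw [← h1, hmin _ hN'M hN'ne hN'cl hN'inv]
  · rintro ⟨hMY, hMc, f, hf, hne, hfM, hmin⟩
    have hrange : M ⊆ Set.range (Subtype.val : Y → X) := by
      rw [Subtype.range_coe]; exact hMY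
    have hM'img : Subtype.val '' (Subtype.val ⁻¹' M : Set Y) = M :=
      Set.image_preimage_eq_of_subset hrange
    have hM'c : IsCompact (Subtype.val ⁻¹' M : Set Y) := by
      rw [Topology.IsEmbedding.subtypeVal.isCompact_iff, hM'img]; exact hMc
    have key2 : ∀ x ∈ M, f x ∈ M := fun x hx => hfM ▸ Set.mem_image_of_mem f hx
    refine ⟨Subtype.val ⁻¹' M, ⟨hM'c, fun y => ⟨r (f ↑y), hrY _⟩,
      ((hr.comp hf).comp continuous_subtype_val).subtype_mk _, ?_, ?_, ?_⟩, hM'img.symm⟩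
    · obtain ⟨x, hx⟩ := hne
      exact ⟨⟨x, hMY hx⟩, hx⟩
    · apply Set.Subset.antisymm
      · rintro _ ⟨y, hy, rfl⟩
        have hfy : f ↑y ∈ M := key2 _ hy
        show r (f ↑y) ∈ M
        rwa [hrid _ (hMY hfy)]
      · intro z hz
        have hz' : (↑z : X) ∈ f '' M := by rw [hfM]; exact hz
        obtain ⟨x, hx, hxz⟩ := hz'
        refine ⟨⟨x, hMY hx⟩, hx, Subtype.ext ?_⟩
        show r (f x) = ↑z
        rw [hxz, hrid _ z.2]
    · intro N' hN'M hN'ne hN'cl hN'inv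
      have hN'c : IsCompact N' := hM'c.of_isClosed_subset hN'cl hN'M
      have hNcl : IsClosed (Subtype.val '' N') :=
        (hN'c.image continuous_subtype_val).isClosed
      have hNM : Subtype.val '' N' ⊆ M := by
        rintro _ ⟨y, hy, rfl⟩; exact hN'M hy
      have hNne : (Subtype.val '' N').Nonempty := hN'ne.image _
      have hNinv : f '' (Subtype.val '' N') ⊆ Subtype.val '' N' := by
        rintro _ ⟨_, ⟨y, hy, rfl⟩, rfl⟩
        have hg : (⟨r (f ↑y), hrY _⟩ : Y) ∈ N' := hN'inv ⟨y, hy, rfl⟩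
        refine ⟨_, hg, ?_⟩
        show r (f ↑y) = f ↑y
        exact hrid _ (hMY (key2 _ (hN'M hy)))
      have hN : Subtype.val '' N' = M := hmin _ hNM hNne hNcl hNinv
      rw [← Set.preimage_image_eq N' Subtype.val_injective, hN]
end

section
/- Let X = L ∪ J ∪ R be a continuum in the class 𝒞 and let f : X → X be a continuous map. If D is a path component of X that is disjoint from J and f(J) ∩ D ≠ ∅, then f(X) ⊆ D. -/
open Set Topology

section HahnMazurkiewicz

open Metric

/-- Chains with small steps inside an open preconnected set. -/
lemma chain_in_connected_open {Y : Type*} [MetricSpace Y] {C : Set Y}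
    (hCo : IsOpen C) (hCc : IsPreconnected C) {x y : Y} (hx : x ∈ C) (hy : y ∈ C)
    {δ : ℝ} (hδ : 0 < δ) :
    ∃ (n : ℕ) (c : ℕ → Y), 0 < n ∧ c 0 = x ∧ (∀ j, n ≤ j → c j = y) ∧
      (∀ j, dist (c j) (c (j + 1)) < δ) ∧ (∀ j, c j ∈ C) := by
  set S : Set Y := {z | z ∈ C ∧ ∃ (n : ℕ) (c : ℕ → Y), 0 < n ∧ c 0 = x ∧
      (∀ j, n ≤ j → c j = z) ∧ (∀ j, dist (c j) (c (j + 1)) < δ) ∧ (∀ j, c j ∈ C)} with hS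
  have hxS : x ∈ S := by
    refine ⟨hx, 1, fun _ => x, one_pos, rfl, fun j _ => rfl, fun j => by simpa using hδ,
      fun j => hx⟩
  have hext : ∀ z ∈ S, ∀ z' ∈ C, dist z z' < δ → z' ∈ S := by
    rintro z ⟨hzC, n, c, hn, hc0, hcn, hstep, hmem⟩ z' hz' hdist
    refine ⟨hz', n + 1, fun j => if j ≤ n then c j else z', by omega, by simp [hc0], ?_, ?_, ?_⟩
    · intro j hj
      simp [Nat.not_le.2 (by omega : n < j)]
    · intro j
      rcases lt_trichotomy j n with h | h | h
      · simpa [h.le, show j + 1 ≤ n from h] using hstep j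
      · subst h
        simpa [Nat.not_le.2 (by omega : j < j + 1), hcn j le_rfl] using hdist
      · simpa [Nat.not_le.2 h, Nat.not_le.2 (by omega : n < j + 1)] using hδ
    · intro j
      by_cases h : j ≤ n
      · simpa [h] using hmem j
      · simpa [h] using hz'
  have hSopen : IsOpen S := by
    refine Metric.isOpen_iff.2 fun z hz => ?_
    obtain ⟨ε, hε, hball⟩ := Metric.isOpen_iff.1 hCo z hz.1
    refine ⟨min ε δ, lt_min hε hδ, fun z' hz' => ?_⟩
    rw [mem_ball, lt_min_iff] at hz'
    exact hext z hz z' (hball (mem_ball.2 hz'.1)) (by rw [dist_comm]; exact hz'.2)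
  have hTopen : IsOpen (C \ S) := by
    refine Metric.isOpen_iff.2 fun z hz => ?_
    obtain ⟨ε, hε, hball⟩ := Metric.isOpen_iff.1 hCo z hz.1
    refine ⟨min ε δ, lt_min hε hδ, fun z' hz' => ?_⟩
    rw [mem_ball, lt_min_iff] at hz'
    have hz'C : z' ∈ C := hball (mem_ball.2 hz'.1)
    refine ⟨hz'C, fun hz'S => hz.2 (hext z' hz'S z hz.1 hz'.2)⟩
  -- use preconnectedness
  by_contra hcon
  have hyT : y ∈ C \ S := by
    refine ⟨hy, fun hyS => hcon ?_⟩
    obtain ⟨-, n, c, hn, hc0, hcn, hstep, hmem⟩ := hyS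
    exact ⟨n, c, hn, hc0, hcn, hstep, hmem⟩
  obtain ⟨w, -, hw1, hw2⟩ := hCc S (C \ S) hSopen hTopen
    (fun z hzC => by by_cases h : z ∈ S; exacts [Or.inl h, Or.inr ⟨hzC, h⟩])
    ⟨x, hx, hxS⟩ ⟨y, hy, hyT⟩
  exact hw2.2 hw1

/-- Uniform local connectedness of compact locally connected metric spaces. -/
lemma ulc_chain {Y : Type*} [MetricSpace Y] [CompactSpace Y] [LocallyConnectedSpace Y]
    {ε : ℝ} (hε : 0 < ε) :
    ∃ δ : ℝ, 0 < δ ∧ δ ≤ ε ∧ ∀ x y : Y, dist x y < δ → ∀ δ' : ℝ, 0 < δ' →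
      ∃ (n : ℕ) (c : ℕ → Y), 0 < n ∧ c 0 = x ∧ (∀ j, n ≤ j → c j = y) ∧
        (∀ j, dist (c j) (c (j + 1)) < δ') ∧ (∀ j, dist x (c j) < ε) := by
  have hV : ∀ x : Y, ∃ V : Set Y, V ⊆ ball x (ε / 2) ∧ IsOpen V ∧ x ∈ V ∧ IsConnected V :=
    fun x => locallyConnectedSpace_iff_subsets_isOpen_isConnected.1 ‹_› x _
      (ball_mem_nhds x (by positivity))
  choose V hVsub hVopen hVmem hVconn using hV
  obtain ⟨δ, hδ, hleb⟩ := lebesgue_number_lemma_of_metric isCompact_univ hVopen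
    (fun x _ => mem_iUnion.2 ⟨x, hVmem x⟩)
  refine ⟨min δ ε, lt_min hδ hε, min_le_right _ _, fun x y hxy δ' hδ' => ?_⟩
  obtain ⟨i, hi⟩ := hleb x (mem_univ x)
  have hxV : x ∈ V i := hi (mem_ball_self hδ)
  have hyV : y ∈ V i := hi (mem_ball.2 (lt_of_lt_of_le (dist_comm x y ▸ hxy) (min_le_left _ _)))
  obtain ⟨n, c, hn, hc0, hcn, hstep, hmem⟩ :=
    chain_in_connected_open (hVopen i) (hVconn i).isPreconnected hxV hyV hδ'
  refine ⟨n, c, hn, hc0, hcn, hstep, fun j => ?_⟩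
  have h1 : dist x i < ε / 2 := mem_ball.1 (hVsub i hxV)
  have h2 : dist (c j) i < ε / 2 := mem_ball.1 (hVsub i (hmem j))
  calc dist x (c j) ≤ dist x i + dist i (c j) := dist_triangle _ _ _
    _ < ε / 2 + ε / 2 := by rw [dist_comm i]; exact add_lt_add h1 h2
    _ = ε := by ring

lemma exists_seq_nat {α : Type*} (P : ℕ → α → Prop) (Q : ℕ → α → α → Prop)
    (h0 : ∃ a, P 0 a) (hstep : ∀ k a, P k a → ∃ b, P (k + 1) b ∧ Q k a b) :
    ∃ f : ℕ → α, (∀ k, P k (f k)) ∧ ∀ k, Q k (f k) (f (k + 1)) := by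
  obtain ⟨a0, ha0⟩ := h0
  choose F hF hQ using hstep
  let g : ∀ _ : ℕ, {a : α // P _ a} := fun k =>
    Nat.rec (motive := fun k => {a : α // P k a}) ⟨a0, ha0⟩
      (fun k p => ⟨F k p.1 p.2, hF k p.1 p.2⟩) k
  exact ⟨fun k => (g k).1, fun k => (g k).2, fun k => hQ k (g k).1 (g k).2⟩

theorem pathConnectedSpace_of_compact_locallyConnected {Y : Type*} [MetricSpace Y]
    [CompactSpace Y] [ConnectedSpace Y] [LocallyConnectedSpace Y] :
    PathConnectedSpace Y := by
  refine ⟨inferInstance, fun a b => ?_⟩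
  have hhalf : ∀ k : ℕ, (0:ℝ) < (1/2) ^ k := fun k => by positivity
  choose δ hδpos hδle hδchain using fun k : ℕ => ulc_chain (Y := Y) (hhalf k)
  set P : ℕ → ℕ × (ℕ → Y) → Prop := fun k p =>
    0 < p.1 ∧ p.2 0 = a ∧ (∀ j, p.1 ≤ j → p.2 j = b) ∧
      ∀ j, dist (p.2 j) (p.2 (j + 1)) < δ (k + 1) with hPdef
  set Q : ℕ → ℕ × (ℕ → Y) → ℕ × (ℕ → Y) → Prop := fun k p p' =>
    ∃ m, 0 < m ∧ p'.1 = p.1 * m ∧ ∀ j, dist (p.2 (j / m)) (p'.2 j) < (1/2:ℝ) ^ (k + 1)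
    with hQdef
  have h0 : ∃ p, P 0 p := by
    obtain ⟨n, c, hn, hc0, hcn, hstep, -⟩ :=
      chain_in_connected_open isOpen_univ isPreconnected_univ (mem_univ a) (mem_univ b)
        (hδpos 1)
    exact ⟨(n, c), hn, hc0, hcn, hstep⟩
  have hstep : ∀ k p, P k p → ∃ p', P (k + 1) p' ∧ Q k p p' := by
    rintro k ⟨N, c⟩ ⟨hN, hc0, hcN, hcstep⟩
    replace hN : 0 < N := hN
    replace hc0 : c 0 = a := hc0
    replace hcN : ∀ j, N ≤ j → c j = b := hcN
    replace hcstep : ∀ j, dist (c j) (c (j + 1)) < δ (k + 1) := hcstep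
    have hchain : ∀ i : ℕ, ∃ (n : ℕ) (s : ℕ → Y), 0 < n ∧ s 0 = c i ∧
        (∀ j, n ≤ j → s j = c (i + 1)) ∧ (∀ j, dist (s j) (s (j + 1)) < δ (k + 2)) ∧
        (∀ j, dist (c i) (s j) < (1/2:ℝ) ^ (k + 1)) :=
      fun i => hδchain (k + 1) (c i) (c (i + 1)) (hcstep i) (δ (k + 2)) (hδpos (k + 2))
    choose n s hn hs0 hsN hsstep hsball using hchain
    set m : ℕ := (Finset.range N).sup n with hmdef
    have hm1 : ∀ i, i < N → n i ≤ m := fun i hi => Finset.le_sup (Finset.mem_range.2 hi)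
    have hmpos : 0 < m := lt_of_lt_of_le (hn 0) (hm1 0 hN)
    set s' : ℕ → ℕ → Y := fun i => if i < N then s i else fun _ => b with hs'def
    set c' : ℕ → Y := fun j => s' (j / m) (j % m) with hc'def
    have f1 : ∀ i, s' i 0 = c i := by
      intro i; by_cases h : i < N
      · simp [hs'def, h, hs0 i]
      · simp [hs'def, h, (hcN i (le_of_not_gt h)).symm]
    have f2 : ∀ i j, m ≤ j → s' i j = c (i + 1) := by
      intro i j hj; by_cases h : i < N
      · simp only [hs'def, if_pos h]; exact hsN i j (le_trans (hm1 i h) hj)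
      · simp [hs'def, h, (hcN (i + 1) (by omega)).symm]
    have f3 : ∀ i j, dist (s' i j) (s' i (j + 1)) < δ (k + 2) := by
      intro i j; by_cases h : i < N
      · simpa [hs'def, h] using hsstep i j
      · simpa [hs'def, h] using hδpos (k + 2)
    have f4 : ∀ i j, dist (c i) (s' i j) < (1/2:ℝ) ^ (k + 1) := by
      intro i j; by_cases h : i < N
      · simpa [hs'def, h] using hsball i j
      · simp only [hs'def, if_neg h, hcN i (le_of_not_gt h)]
        simpa using hhalf (k + 1)
    have f5 : ∀ j, c' (j + 1) = s' (j / m) (j % m + 1) := by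
      intro j
      have hmod := Nat.div_add_mod j m
      rcases Nat.lt_or_ge (j % m + 1) m with h | h
      · have hj1 : j + 1 = (j % m + 1) + m * (j / m) := by omega
        have hdiv : (j + 1) / m = j / m := by
          rw [hj1, Nat.add_mul_div_left _ _ hmpos, Nat.div_eq_of_lt h, Nat.zero_add]
        have hmod' : (j + 1) % m = j % m + 1 := by
          rw [hj1, Nat.add_mul_mod_self_left, Nat.mod_eq_of_lt h]
        rw [hc'def]; simp only []
        rw [hdiv, hmod']
      · have hr : j % m + 1 = m := by
          have := Nat.mod_lt j hmpos; omega
        have hj1 : j + 1 = m * (j / m + 1) := by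
          rw [Nat.mul_succ]
          calc j + 1 = m * (j / m) + j % m + 1 := by rw [hmod]
            _ = m * (j / m) + m := by rw [Nat.add_assoc, hr]
        have hdiv : (j + 1) / m = j / m + 1 := by
          rw [hj1, Nat.mul_div_cancel_left _ hmpos]
        have hmod' : (j + 1) % m = 0 := by rw [hj1, Nat.mul_mod_right]
        rw [hc'def]; simp only []
        rw [hdiv, hmod', f1 (j / m + 1), ← f2 (j / m) m le_rfl, hr]
    refine ⟨(N * m, c'), ⟨Nat.mul_pos hN hmpos, ?_, ?_, ?_⟩, ⟨m, hmpos, rfl, ?_⟩⟩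
    · show s' (0 / m) (0 % m) = a
      rw [Nat.zero_div, Nat.zero_mod, f1 0]
      exact hc0
    · intro j hj
      have h1 : N ≤ j / m := (Nat.le_div_iff_mul_le hmpos).2 hj
      show s' (j / m) (j % m) = b
      simp [hs'def, not_lt.2 h1]
    · intro j
      show dist (c' j) (c' (j + 1)) < δ (k + 1 + 1)
      rw [f5 j]
      exact f3 (j / m) (j % m)
    · intro j
      exact f4 (j / m) (j % m)
  obtain ⟨f, hPf, hQf⟩ := exists_seq_nat P Q h0 hstep
  set γ : ℕ → ℝ → Y := fun k t => (f k).2 (⌊t * (f k).1⌋₊) with hγdef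
  have E1 : ∀ t : ℝ, ∀ k : ℕ, dist (γ k t) (γ (k + 1) t) ≤ (1/2:ℝ) * (1/2) ^ k := by
    intro t k
    obtain ⟨m, hm, hNm, hQd⟩ := hQf k
    have hcast : (((f (k + 1)).1 : ℝ)) = ((f k).1 : ℝ) * m := by
      rw [hNm]; push_cast; ring
    have hfloor : ⌊t * (f k).1⌋₊ = ⌊t * (f (k + 1)).1⌋₊ / m := by
      have : t * (f k).1 = t * (f (k + 1)).1 / m := by
        rw [hcast]
        field_simp
      rw [this, Nat.floor_div_natCast]
    rw [hγdef]
    simp only []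
    rw [hfloor]
    calc dist ((f k).2 (⌊t * (f (k+1)).1⌋₊ / m)) ((f (k+1)).2 ⌊t * (f (k+1)).1⌋₊)
        ≤ (1/2:ℝ) ^ (k+1) := (hQd _).le
      _ = (1/2:ℝ) * (1/2) ^ k := by ring
  have hcauchy : ∀ t : ℝ, ∃ y : Y, Filter.Tendsto (fun k => γ k t) Filter.atTop (nhds y) :=
    fun t => cauchySeq_tendsto_of_complete
      (cauchySeq_of_le_geometric (1/2) (1/2) (by norm_num) (E1 t))
  choose g hg using hcauchy
  have E2 : ∀ t k, dist (γ k t) (g t) ≤ (1/2:ℝ) ^ k := by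
    intro t k
    have := dist_le_of_le_geometric_of_tendsto (1/2) (1/2) (by norm_num) (E1 t) (hg t) k
    calc dist (γ k t) (g t) ≤ (1/2:ℝ) * (1/2) ^ k / (1 - 1/2) := this
      _ = (1/2:ℝ) ^ k := by ring
  have E3 : ∀ k, ∀ s t : ℝ, 0 ≤ s → s ≤ t → (t - s) * (f k).1 < 1 →
      dist (γ k s) (γ k t) ≤ (1/2:ℝ) ^ (k + 1) := by
    intro k s t hs hst hlt
    have hNpos : (0:ℝ) ≤ ((f k).1 : ℝ) := Nat.cast_nonneg _
    have hi : ⌊s * (f k).1⌋₊ ≤ ⌊t * (f k).1⌋₊ :=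
      Nat.floor_le_floor (mul_le_mul_of_nonneg_right hst hNpos)
    have hi' : ⌊t * (f k).1⌋₊ ≤ ⌊s * (f k).1⌋₊ + 1 := by
      have h1 : t * (f k).1 ≤ s * (f k).1 + 1 := by nlinarith
      calc ⌊t * (f k).1⌋₊ ≤ ⌊s * (f k).1 + 1⌋₊ := Nat.floor_le_floor h1
        _ = ⌊s * (f k).1⌋₊ + 1 := by
          rw [Nat.floor_add_one (by positivity)]
    rcases eq_or_lt_of_le hi with heq | hlt2
    · rw [hγdef]; simp only []; rw [heq]
      simpa using (pow_nonneg (by norm_num : (0:ℝ) ≤ 1/2) (k+1))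
    · have heq : ⌊t * (f k).1⌋₊ = ⌊s * (f k).1⌋₊ + 1 := by omega
      rw [hγdef]; simp only []; rw [heq]
      exact le_trans ((hPf k).2.2.2 _).le (hδle (k + 1))
  have hNposk : ∀ k, 0 < (f k).1 := fun k => (hPf k).1
  have hga : g 0 = a := by
    have hconst : (fun k => γ k 0) = fun _ => a := by
      funext k
      rw [hγdef]
      simp only []
      rw [zero_mul, Nat.floor_zero, (hPf k).2.1]
    have := hg 0
    rw [hconst] at this
    exact tendsto_nhds_unique this tendsto_const_nhds
  have hgb : g 1 = b := by
    have hconst : (fun k => γ k 1) = fun _ => b := by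
      funext k
      rw [hγdef]
      simp only []
      rw [one_mul, Nat.floor_natCast]
      exact (hPf k).2.2.1 _ le_rfl
    have := hg 1
    rw [hconst] at this
    exact tendsto_nhds_unique this tendsto_const_nhds
  have hcont : Continuous fun t : unitInterval => g t.1 := by
    rw [Metric.continuous_iff]
    intro t ε hε
    obtain ⟨k, hk⟩ := exists_pow_lt_of_lt_one (show (0:ℝ) < ε/4 by positivity)
      (by norm_num : (1:ℝ)/2 < 1)
    have hN' : (0:ℝ) < ((f k).1 : ℝ) := by exact_mod_cast hNposk k
    refine ⟨1 / (f k).1, div_pos one_pos hN', fun s hst => ?_⟩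
    have hd : |s.1 - t.1| < 1 / (f k).1 := by
      rw [Subtype.dist_eq, Real.dist_eq] at hst; exact hst
    have key : dist (γ k s.1) (γ k t.1) ≤ (1/2:ℝ) ^ (k + 1) := by
      rcases le_total s.1 t.1 with h | h
      · refine E3 k s.1 t.1 s.2.1 h ?_
        have h2 : t.1 - s.1 < 1 / (f k).1 := by
          rw [abs_sub_comm] at hd
          exact lt_of_le_of_lt (le_abs_self _) hd
        calc (t.1 - s.1) * (f k).1 < (1 / (f k).1) * (f k).1 :=
              mul_lt_mul_of_pos_right h2 hN'
          _ = 1 := by field_simp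
      · rw [dist_comm]
        refine E3 k t.1 s.1 t.2.1 h ?_
        have h2 : s.1 - t.1 < 1 / (f k).1 := lt_of_le_of_lt (le_abs_self _) hd
        calc (s.1 - t.1) * (f k).1 < (1 / (f k).1) * (f k).1 :=
              mul_lt_mul_of_pos_right h2 hN'
          _ = 1 := by field_simp
    calc dist (g s.1) (g t.1)
        ≤ dist (g s.1) (γ k s.1) + dist (γ k s.1) (γ k t.1) + dist (γ k t.1) (g t.1) :=
          dist_triangle4 _ _ _ _
      _ ≤ (1/2:ℝ) ^ k + (1/2) ^ (k + 1) + (1/2) ^ k := by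
          have h1 := E2 s.1 k
          have h2 := E2 t.1 k
          rw [dist_comm] at h1
          linarith [key]
      _ ≤ 3 * (1/2:ℝ) ^ k := by
          have : (1/2:ℝ) ^ (k+1) ≤ (1/2) ^ k := by
            rw [pow_succ]
            nlinarith [hhalf k]
          linarith
      _ < ε := by linarith [hk]
  exact ⟨⟨⟨fun t => g t.1, hcont⟩, hga, hgb⟩⟩

end HahnMazurkiewicz

/-- If `X = L ∪ J ∪ R ∈ 𝒞`, `f : X → X` is continuous, and `D` is a path
component of `X` disjoint from `J` with `f(J) ∩ D ≠ ∅`, then `f(X) ⊆ D`. -/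
theorem stmt13 {X : Type*} [TopologicalSpace X] [CompactSpace X] [ConnectedSpace X]
    [TopologicalSpace.MetrizableSpace X] {L J R : Set X} (hC : ClassC L J R)
    (f : X → X) (hf : Continuous f) (D : Set X) (hD : ∃ x, D = pathComponent x)
    (hDJ : Disjoint D J) (hfJD : (f '' J ∩ D).Nonempty) :
    Set.range f ⊆ D := by
  obtain ⟨openJ, freeJ, denseJ, union_eq, compactL, connL, locConnL, compactR, connR,
    locConnR⟩ : IsOpen J ∧ Nonempty (↥J ≃ₜ ↥(Set.Ioo (0:ℝ) 1)) ∧ Dense J ∧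
      L ∪ J ∪ R = Set.univ ∧ IsCompact L ∧ IsConnected L ∧ LocallyConnectedSpace ↥L ∧
      IsCompact R ∧ IsConnected R ∧ LocallyConnectedSpace ↥R :=
    ⟨hC.openJ, hC.freeJ, hC.denseJ, hC.union_eq, hC.compactL, hC.connL, hC.locConnL,
      hC.compactR, hC.connR, hC.locConnR⟩
  letI := TopologicalSpace.metrizableSpaceMetric X
  obtain ⟨x₀, rfl⟩ := hD
  -- J is path connected
  have hJpc : IsPathConnected J := by
    obtain ⟨e⟩ := freeJ
    have h1 : IsPathConnected (Set.Ioo (0:ℝ) 1) :=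
      (convex_Ioo (0:ℝ) 1).isPathConnected (by exact ⟨1/2, by norm_num⟩)
    have h2 : PathConnectedSpace ↥(Set.Ioo (0:ℝ) 1) :=
      isPathConnected_iff_pathConnectedSpace.1 h1
    have h3 : PathConnectedSpace ↥J := by
      constructor
      · exact ⟨e.symm (Classical.arbitrary _)⟩
      · intro x y
        obtain ⟨p⟩ := PathConnectedSpace.joined (e x) (e y)
        have : Joined (e.symm (e x)) (e.symm (e y)) := ⟨p.map e.symm.continuous⟩
        simpa using this
    exact isPathConnected_iff_pathConnectedSpace.2 h3
  -- L and R are path connected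
  have hLpc : IsPathConnected L := by
    haveI : CompactSpace ↥L := isCompact_iff_compactSpace.1 compactL
    haveI : ConnectedSpace ↥L := Subtype.connectedSpace connL
    exact isPathConnected_iff_pathConnectedSpace.2
      pathConnectedSpace_of_compact_locallyConnected
  have hRpc : IsPathConnected R := by
    haveI : CompactSpace ↥R := isCompact_iff_compactSpace.1 compactR
    haveI : ConnectedSpace ↥R := Subtype.connectedSpace connR
    exact isPathConnected_iff_pathConnectedSpace.2
      pathConnectedSpace_of_compact_locallyConnected
  obtain ⟨y, hyfJ, hyD⟩ := hfJD
  -- f '' J ⊆ D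
  have hfJpc : IsPathConnected (f '' J) := hJpc.image hf
  have hfJD' : f '' J ⊆ pathComponent x₀ := by
    intro z hz
    exact Joined.trans hyD (hfJpc.joinedIn y hyfJ z hz).joined
  -- D ⊆ L ∪ R
  have hDLR : pathComponent x₀ ⊆ L ∪ R := by
    intro z hz
    have hz' : z ∈ L ∪ J ∪ R := union_eq ▸ mem_univ z
    have hznJ : z ∉ J := fun h => (hDJ.ne_of_mem hz h) rfl
    rcases hz' with (h | h) | h
    · exact Or.inl h
    · exact absurd h hznJ
    · exact Or.inr h
  -- range f ⊆ closure (f '' J)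
  have hrange : Set.range f ⊆ closure (f '' J) := by
    rw [← image_univ, ← denseJ.closure_eq]
    exact image_closure_subset_closure_image hf
  have hLclosed : IsClosed L := compactL.isClosed
  have hRclosed : IsClosed R := compactR.isClosed
  have hKLR : closure (f '' J) ⊆ L ∪ R :=
    closure_minimal (fun z hz => hDLR (hfJD' hz)) (hLclosed.union hRclosed)
  -- helper: if a path-connected set meets D, it is contained in D
  have hsub : ∀ S : Set X, IsPathConnected S → ∀ w, w ∈ S → w ∈ pathComponent x₀ →
      S ⊆ pathComponent x₀ := by
    intro S hS w hwS hwD z hz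
    exact Joined.trans hwD (hS.joinedIn w hwS z hz).joined
  have hyLR : y ∈ L ∪ R := hDLR hyD
  by_cases hLR : (L ∩ R).Nonempty
  · -- L ∪ R is entirely in D
    obtain ⟨w, hwL, hwR⟩ := hLR
    have hLD : L ⊆ pathComponent x₀ ∨ R ⊆ pathComponent x₀ := by
      rcases hyLR with h | h
      · exact Or.inl (hsub L hLpc y h hyD)
      · exact Or.inr (hsub R hRpc y h hyD)
    have hboth : L ⊆ pathComponent x₀ ∧ R ⊆ pathComponent x₀ := by
      rcases hLD with h | h
      · exact ⟨h, hsub R hRpc w hwR (h hwL)⟩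
      · exact ⟨hsub L hLpc w hwL (h hwR), h⟩
    intro z hz
    rcases hKLR (hrange hz) with h | h
    · exact hboth.1 h
    · exact hboth.2 h
  · -- L and R are disjoint; the connected set closure (f '' J) lies in one of them
    have hdisj : Disjoint L R :=
      Set.disjoint_iff_inter_eq_empty.2 (Set.not_nonempty_iff_eq_empty.1 hLR)
    obtain ⟨U, V, hUo, hVo, hLU, hRV, hUV⟩ :=
      SeparatedNhds.of_isCompact_isCompact_isClosed compactL compactR hRclosed hdisj
    have hKconn : IsPreconnected (closure (f '' J)) :=
      hfJpc.isConnected.closure.isPreconnected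
    have hKUV : closure (f '' J) ⊆ U ∪ V :=
      fun z hz => (hKLR hz).elim (fun h => Or.inl (hLU h)) (fun h => Or.inr (hRV h))
    have hyK : y ∈ closure (f '' J) := subset_closure hyfJ
    rcases hyLR with hyL | hyR
    · have hKU : closure (f '' J) ⊆ U :=
        hKconn.subset_left_of_subset_union hUo hVo hUV hKUV ⟨y, hyK, hLU hyL⟩
      have hKL : closure (f '' J) ⊆ L := by
        intro z hz
        rcases hKLR hz with h | h
        · exact h
        · exact absurd (hKU hz) (fun hzU => hUV.ne_of_mem hzU (hRV h) rfl)
      exact fun z hz => hsub L hLpc y hyL hyD (hKL (hrange hz))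
    · have hKV : closure (f '' J) ⊆ V :=
        hKconn.subset_right_of_subset_union hUo hVo hUV hKUV ⟨y, hyK, hRV hyR⟩
      have hKR : closure (f '' J) ⊆ R := by
        intro z hz
        rcases hKLR hz with h | h
        · exact absurd (hKV hz) (fun hzV => hUV.ne_of_mem (hLU h) hzV rfl)
        · exact h
      exact fun z hz => hsub R hRpc y hyR hyD (hKR (hrange hz))
end

section
/- Let X be a compact metrizable space, f : X → X a continuous map, and M a minimal set of (X, f). Suppose P_1, P_2, …, P_k (k ∈ ℕ) are pairwise distinct path components of X such that M ⊆ P_1 ∪ … ∪ P_k and M ∩ P_i ≠ ∅ for every i ∈ {1, …, k}. Then there is a unique map φ : {1, …, k} → {1, …, k} such that f(P_i) ⊆ P_{φ(i)} for every i, and this φ is a permutation of {1, …, k}. Moreover, if M intersects the interior of some P_i taken with respect to the subspace topology on P_1 ∪ … ∪ P_k, then φ is a cyclic permutation, i.e., the φ-orbit of any index is all of {1, …, k}. -/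
open Set Topology

/-- Let `X` be compact metrizable, `f : X → X` continuous, `M` a minimal set
of `(X, f)`, and `P₁, …, P_k` pairwise distinct path components of `X` covering `M` and
each meeting `M`. Then there is a unique `φ : Fin k → Fin k` with `f(Pᵢ) ⊆ P_{φ(i)}` for
all `i`; any such `φ` is a permutation; and if moreover `M` meets the interior of some
`Pᵢ` with respect to the subspace topology on `P₁ ∪ … ∪ P_k`, then `φ` is a cycle. -/
theorem stmt14 {X : Type*} [TopologicalSpace X] [CompactSpace X]
    [TopologicalSpace.MetrizableSpace X] (f : X → X) (hf : Continuous f)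
    (M : Set X) (hMne : M.Nonempty) (hMcl : IsClosed M) (hMinv : f '' M ⊆ M)
    (hMmin : ∀ N, N ⊆ M → N.Nonempty → IsClosed N → f '' N ⊆ N → N = M)
    (k : ℕ) (hk : 0 < k) (P : Fin k → Set X)
    (hP : ∀ i, ∃ x, P i = pathComponent x) (hPinj : Function.Injective P)
    (hMP : M ⊆ ⋃ i, P i) (hMPi : ∀ i, (M ∩ P i).Nonempty) :
    (∃! φ : Fin k → Fin k, ∀ i, f '' P i ⊆ P (φ i)) ∧
    ∀ φ : Fin k → Fin k, (∀ i, f '' P i ⊆ P (φ i)) →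
      Function.Bijective φ ∧
      ((∃ i : Fin k,
          ((Subtype.val ⁻¹' M : Set ↥(⋃ j, P j)) ∩
            interior (Subtype.val ⁻¹' (P i))).Nonempty) →
        ∀ i j : Fin k, ∃ m : ℕ, φ^[m] i = j) := by
  classical
  -- path components are pairwise equal-or-disjoint
  have hPC : ∀ i (x : X), x ∈ P i → P i = pathComponent x := by
    intro i x hx
    obtain ⟨a, ha⟩ := hP i
    rw [ha] at hx ⊢
    exact (pathComponent_congr hx).symm
  have hdisj : ∀ i j : Fin k, i ≠ j → ∀ z, z ∈ P i → z ∈ P j → False := by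
    intro i j hij z hzi hzj
    exact hij (hPinj ((hPC i z hzi).trans (hPC j z hzj).symm))
  have hPne : ∀ i, (P i).Nonempty := fun i => ((hMPi i).mono inter_subset_right)
  -- M is compact, f '' M = M
  have hT2 : T2Space X := TopologicalSpace.t2Space_of_metrizableSpace
  have hMcomp : IsCompact M := hMcl.isCompact
  have hfM : f '' M = M := by
    refine hMmin _ hMinv ⟨f hMne.choose, ⟨hMne.choose, hMne.choose_spec, rfl⟩⟩
      ((hMcomp.image hf).isClosed) (Set.image_mono (f := f) hMinv)
  -- existence of φ
  have hex : ∀ i, ∃ j, f '' P i ⊆ P j := by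
    intro i
    obtain ⟨x, hxM, hxP⟩ := hMPi i
    have hfx : f x ∈ M := hMinv ⟨x, hxM, rfl⟩
    obtain ⟨j, hj⟩ := Set.mem_iUnion.mp (hMP hfx)
    refine ⟨j, ?_⟩
    have hpc : IsPathConnected (f '' P i) := by
      obtain ⟨a, ha⟩ := hP i
      rw [ha]
      exact isPathConnected_pathComponent.image hf
    have := hpc.subset_pathComponent (show f x ∈ f '' P i from ⟨x, hxP, rfl⟩)
    rwa [← hPC j (f x) hj] at this
  choose φ0 hφ0 using hex
  -- uniqueness of the target index
  have huniq : ∀ (ψ : Fin k → Fin k), (∀ i, f '' P i ⊆ P (ψ i)) → ψ = φ0 := by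
    intro ψ hψ
    funext i
    by_contra hne
    obtain ⟨x, hx⟩ := hPne i
    exact hdisj _ _ hne (f x) (hψ i ⟨x, hx, rfl⟩) (hφ0 i ⟨x, hx, rfl⟩)
  refine ⟨⟨φ0, hφ0, huniq⟩, ?_⟩
  intro φ hφ
  -- bijectivity
  have hMPinv : ∀ i, f '' (M ∩ P i) ⊆ M ∩ P (φ i) := by
    intro i z ⟨w, ⟨hwM, hwP⟩, hwz⟩
    exact ⟨hwz ▸ hMinv ⟨w, hwM, rfl⟩, hwz ▸ hφ i ⟨w, hwP, rfl⟩⟩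
  have hsurj : Function.Surjective φ := by
    intro j
    obtain ⟨x, hxM, hxP⟩ := hMPi j
    have hxM' : x ∈ f '' M := by rw [hfM]; exact hxM
    obtain ⟨y, hyM, hyx⟩ := hxM'
    obtain ⟨i, hi⟩ := Set.mem_iUnion.mp (hMP hyM)
    refine ⟨i, ?_⟩
    by_contra hne
    exact hdisj _ _ hne x (hyx ▸ hφ i ⟨y, hi, rfl⟩) hxP
  have hbij : Function.Bijective φ := Finite.surjective_iff_bijective.mp hsurj
  refine ⟨hbij, ?_⟩
  -- cycle part
  rintro ⟨i₀, y, hyM, hyint⟩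
  set e : Equiv.Perm (Fin k) := Equiv.ofBijective φ hbij with he
  have hecoe : ⇑e = φ := rfl
  obtain ⟨n, hn0, hen⟩ : ∃ n, 0 < n ∧ e ^ n = 1 :=
    ⟨orderOf e, orderOf_pos e, pow_orderOf_eq_one e⟩
  have hiter : φ^[n] = id := by
    have : ⇑(e ^ n) = φ^[n] := by rw [Equiv.Perm.coe_pow, hecoe]
    rw [hen] at this; exact this.symm
  set O : Set (Fin k) := {j | ∃ m : ℕ, φ^[m] i₀ = j} with hO
  have hi₀O : i₀ ∈ O := ⟨0, rfl⟩
  have hOinv : ∀ j, j ∉ O → φ j ∉ O := by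
    rintro j hj ⟨m, hm⟩
    rcases m with _ | m'
    · -- φ j = i₀
      apply hj
      refine ⟨n - 1, hbij.1 ?_⟩
      rw [← Function.iterate_succ_apply' φ (n-1) i₀, Nat.succ_eq_add_one,
        Nat.sub_add_cancel hn0, hiter]
      exact hm
    · apply hj
      refine ⟨m', hbij.1 ?_⟩
      rw [Function.iterate_succ_apply'] at hm
      exact hm
  -- main claim : O = univ
  have hOuniv : ∀ j, j ∈ O := by
    by_contra hc
    push_neg at hc
    obtain ⟨j₀, hj₀⟩ := hc
    set T : Set X := M ∩ ⋃ j ∈ {j | j ∉ O}, P j with hT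
    have hTne : T.Nonempty := by
      obtain ⟨x, hxM, hxP⟩ := hMPi j₀
      exact ⟨x, hxM, Set.mem_biUnion hj₀ hxP⟩
    have hTM : T ⊆ M := Set.inter_subset_left
    have hfT : f '' T ⊆ T := by
      rintro z ⟨w, ⟨hwM, hwP⟩, hwz⟩
      obtain ⟨j, hjO, hjP⟩ := Set.mem_iUnion₂.mp hwP
      obtain ⟨hzM, hzP⟩ := hMPinv j ⟨w, ⟨hwM, hjP⟩, hwz⟩
      exact ⟨hzM, Set.mem_biUnion (hOinv j hjO) hzP⟩
    have hclT : closure T = M := by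
      refine hMmin _ (hMcl.closure_subset_iff.mpr hTM) (hTne.mono subset_closure)
        isClosed_closure ?_
      exact (image_closure_subset_closure_image hf).trans (closure_mono hfT)
    -- extract a neighborhood from the interior hypothesis
    have hmem : (Subtype.val ⁻¹' (P i₀) : Set ↥(⋃ j, P j)) ∈ 𝓝 y :=
      mem_interior_iff_mem_nhds.mp hyint
    rw [nhds_induced] at hmem
    obtain ⟨V, hV, hVsub⟩ := Filter.mem_comap.mp hmem
    -- (y : X) ∈ M = closure T, so V meets T
    have hyMX : (y : X) ∈ closure T := hclT ▸ hyM
    obtain ⟨z, hzV, hzM, hzP⟩ := (mem_closure_iff_nhds.mp hyMX V hV)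
    obtain ⟨j, hjO, hjP⟩ := Set.mem_iUnion₂.mp hzP
    -- z ∈ ⋃ P, z ∈ V, hence z ∈ P i₀
    have hzY : z ∈ ⋃ j, P j := hMP hzM
    have hzi₀ : z ∈ P i₀ := hVsub (show (⟨z, hzY⟩ : ↥(⋃ j, P j)).val ∈ V from hzV)
    exact hdisj j i₀ (fun h => hjO (h ▸ hi₀O)) z hjP hzi₀
  -- conclude cyclicity
  intro i j
  obtain ⟨a, ha⟩ := hOuniv i
  obtain ⟨b, hb⟩ := hOuniv j
  refine ⟨b + (n - 1) * a, ?_⟩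
  rw [← ha, ← Function.iterate_add_apply]
  have : b + (n - 1) * a + a = b + n * a := by
    have h1 : (n - 1) * a + a = n * a := by
      rcases n with _ | n'
      · omega
      · simp only [Nat.succ_sub_one]; ring
    omega
  rw [this, Function.iterate_add_apply, Function.iterate_mul, hiter]
  simp [hb]
end
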